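/- arXiv:2411.08546 — 10 statements merged into one kernel-verified Lean document; each statement's English description precedes it below -/
import Mathlib

section
/- Let 2 ≤ ℓ ≤ k and n ≥ k + ℓ. If F ⊆ binom([n], k) and G ⊆ binom([n], ℓ) are non-empty cross-intersecting families, then |F| + |G| ≤ C(n,k) - C(n-ℓ,k) + 1. -/
open Finset UV

namespace CrossInt

lemma chooseA (M : ℕ) : ∀ y x, x ≤ y → 2 * y ≤ M → M.choose x ≤ M.choose y := by
  intro y
  induction y with
  | zero => intro x hx _; interval_cases x; exact le_rfl
  | succ y ih =>
    intro x hx hy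
    rcases Nat.eq_or_lt_of_le hx with h | h
    · subst h; exact le_rfl
    · refine (ih x (by omega) (by omega)).trans ?_
      apply Nat.choose_le_succ_of_lt_half_left
      have : y + 1 ≤ M / 2 := (Nat.le_div_iff_mul_le (by norm_num)).mpr (by omega)
      omega

lemma choose_mid {M x y : ℕ} (hxy : x ≤ y) (h : x + y ≤ M) :
    M.choose x ≤ M.choose y := by
  by_cases hc : 2 * y ≤ M
  · exact chooseA M y x hxy hc
  · have hyM : y ≤ M := by omega
    rw [(Nat.choose_symm hyM).symm]
    exact chooseA M (M - y) x (by omega) (by omega)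

-- (B)
lemma chooseB {b a M : ℕ} (hba : b ≤ a) (hM : a + b + 2 ≤ M) :
    M.choose b + a ≤ M.choose a + b := by
  rcases Nat.eq_or_lt_of_le hba with h | h
  · subst h; omega
  · have key : M.choose b + (a - b) ≤ M.choose (b + 1) := by
      set C := M.choose b with hC
      set X := M.choose (b + 1) with hX
      have hid : X * (b + 1) = C * (M - b) := Nat.choose_succ_right_eq M b
      set d := a - b with hd
      have hd1 : 1 ≤ d := by omega
      have hmul : (C + d) * (b + 1) ≤ X * (b + 1) := by
        rw [hid]
        rcases Nat.eq_zero_or_pos b with hb0 | hb0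
        · subst hb0
          have hC1 : C = 1 := by simp [hC]
          rw [hC1]
          simp
          omega
        · have hC1 : M ≤ C := by
            have : M.choose 1 ≤ C := choose_mid (by omega) (by omega)
            simpa [Nat.choose_one_right] using this
          have h1 : C * (M - b) ≥ C * (b + 1) + C * (d + 1) := by
            have : C * (b + 1 + (d + 1)) ≤ C * (M - b) := Nat.mul_le_mul_left C (by omega)
            nlinarith
          nlinarith
      have := Nat.le_of_mul_le_mul_right hmul (by omega : 0 < b + 1)
      omega
    have h2 : M.choose (b+1) ≤ M.choose a := choose_mid (by omega) (by omega)
    omega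

-- (Pg) generalized inequality
lemma choosePg : ∀ b a p q m : ℕ, b ≤ a → b + q = a + p → b + 1 ≤ p → q + b + 1 ≤ m →
    m.choose b + (m - p).choose a ≤ m.choose a + (m - q).choose b := by
  intro b
  induction b with
  | zero =>
    intro a p q m _ _ _ _
    have h1 : (m - p).choose a ≤ m.choose a := Nat.choose_le_choose a (by omega)
    simp only [Nat.choose_zero_right]
    omega
  | succ b ihb =>
    intro a p q m hba hsum hp hm
    -- induction on m from base q + b + 2
    induction m, hm using Nat.le_induction with
    | base =>
      -- m = q + (b+1) + 1 = q + b + 2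
      have hq : a + 1 ≤ q := by omega
      have hmp : q + b + 2 - p = a + 1 := by omega
      have hmq : q + b + 2 - q = b + 2 := by omega
      have hqb : q + (b + 1) + 1 = q + b + 2 := by omega
      rw [hqb, hmp, hmq, Nat.choose_succ_self_right]
      have hbase : (q + b + 2).choose (b + 1) + a ≤ (q + b + 2).choose a + (b + 1) :=
        chooseB (by omega) (by omega)
      have : (b + 2).choose (b + 1) = b + 2 := Nat.choose_succ_self_right _
      omega
    | succ m hm' ihm =>
      have ha1 : 1 ≤ a := by omega
      have hpm : p ≤ m := by omega
      have hqm : q ≤ m := by omega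
      have e1 : (m + 1).choose (b + 1) = m.choose b + m.choose (b + 1) :=
        Nat.choose_succ_succ' m b
      have e2 : (m + 1).choose a = m.choose (a - 1) + m.choose a := by
        obtain ⟨a', rfl⟩ : ∃ a', a = a' + 1 := ⟨a - 1, by omega⟩
        simpa using Nat.choose_succ_succ' m a'
      have e3 : m + 1 - p = (m - p) + 1 := by omega
      have e4 : m + 1 - q = (m - q) + 1 := by omega
      have e5 : (m + 1 - p).choose a = (m - p).choose (a - 1) + (m - p).choose a := by
        rw [e3]
        obtain ⟨a', rfl⟩ : ∃ a', a = a' + 1 := ⟨a - 1, by omega⟩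
        simpa using Nat.choose_succ_succ' (m - p) a'
      have e6 : (m + 1 - q).choose (b + 1) = (m - q).choose b + (m - q).choose (b + 1) := by
        rw [e4]; exact Nat.choose_succ_succ' (m - q) b
      have IH1 : m.choose (b + 1) + (m - p).choose a ≤ m.choose a + (m - q).choose (b + 1) :=
        ihm
      have IH2 : m.choose b + (m - p).choose (a - 1) ≤ m.choose (a - 1) + (m - q).choose b :=
        ihb (a - 1) p q m (by omega) (by omega) (by omega) (by omega)
      omega

-- (P)
lemma chooseP {l k m : ℕ} (hl : 1 ≤ l) (hlk : l ≤ k) (hm : k + l ≤ m) :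
    m.choose (l - 1) + (m - l).choose (k - 1) ≤ m.choose (k - 1) + (m - k).choose (l - 1) := by
  have := choosePg (l - 1) (k - 1) l k m (by omega) (by omega) (by omega) (by omega)
  exact this

lemma compress_eq {i j : ℕ} (A : Finset ℕ) (hi : i ∉ A) (hj : j ∈ A) :
    UV.compress {i} {j} A = insert i (A.erase j) := by
  rw [UV.compress, if_pos ⟨Finset.disjoint_singleton_left.mpr hi, Finset.singleton_subset_iff.mpr hj⟩]
  have hij : i ≠ j := fun h => hi (h ▸ hj)
  ext x
  simp only [sup_eq_union, mem_sdiff, mem_union, mem_singleton, mem_insert, mem_erase]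
  constructor
  · rintro ⟨hx1 | hx1, hx2⟩
    · exact Or.inr ⟨hx2, hx1⟩
    · exact Or.inl hx1
  · rintro (rfl | ⟨hx1, hx2⟩)
    · exact ⟨Or.inr rfl, hij⟩
    · exact ⟨Or.inl hx2, hx1⟩

lemma compress_eq_self {i j : ℕ} (A : Finset ℕ) (h : i ∈ A ∨ j ∉ A) :
    UV.compress {i} {j} A = A := by
  rw [UV.compress, if_neg]
  rintro ⟨h1, h2⟩
  rw [Finset.disjoint_singleton_left] at h1
  rw [Finset.le_iff_subset, Finset.singleton_subset_iff] at h2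
  tauto

/-- half-case of cross-intersecting preservation -/
lemma crossHalf {i j : ℕ} {F G : Finset (Finset ℕ)}
    (hcross : ∀ A ∈ F, ∀ B ∈ G, (A ∩ B).Nonempty)
    {A' : Finset ℕ} (hA : A' ∈ F) (hcA : UV.compress {i} {j} A' ∈ F)
    {B : Finset ℕ} (hB : B ∈ G) :
    (A' ∩ UV.compress {i} {j} B).Nonempty := by
  by_cases hBm : i ∈ B ∨ j ∉ B
  · rw [compress_eq_self B hBm]; exact hcross A' hA B hB
  · push_neg at hBm
    obtain ⟨hiB, hjB⟩ := hBm
    rw [compress_eq B hiB hjB]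
    obtain ⟨x, hx⟩ := hcross A' hA B hB
    rw [mem_inter] at hx
    by_cases hxj : x = j
    · subst hxj
      -- j ∈ A'
      by_cases hiA : i ∈ A'
      · exact ⟨i, mem_inter.mpr ⟨hiA, mem_insert_self _ _⟩⟩
      · -- compress A' is a genuine move
        rw [compress_eq A' hiA hx.1] at hcA
        obtain ⟨y, hy⟩ := hcross _ hcA B hB
        rw [mem_inter, mem_insert, mem_erase] at hy
        rcases hy with ⟨rfl | ⟨hyj, hyA⟩, hyB⟩
        · exact absurd hyB hiB
        · exact ⟨y, mem_inter.mpr ⟨hyA, mem_insert_of_mem (mem_erase.mpr ⟨hyj, hyB⟩)⟩⟩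
    · exact ⟨x, mem_inter.mpr ⟨hx.1, mem_insert_of_mem (mem_erase.mpr ⟨hxj, hx.2⟩)⟩⟩

lemma cross_compression {i j : ℕ} {F G : Finset (Finset ℕ)}
    (hcross : ∀ A ∈ F, ∀ B ∈ G, (A ∩ B).Nonempty) :
    ∀ A' ∈ UV.compression {i} {j} F, ∀ B' ∈ UV.compression {i} {j} G, (A' ∩ B').Nonempty := by
  have hcross' : ∀ B ∈ G, ∀ A ∈ F, (B ∩ A).Nonempty := by
    intro B hB A hA
    rw [inter_comm]; exact hcross A hA B hB
  intro A' hA' B' hB'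
  rw [UV.mem_compression] at hA' hB'
  rcases hA' with ⟨hAF, hcAF⟩ | ⟨hAnF, A, hAF, rfl⟩
  · rcases hB' with ⟨hBG, _⟩ | ⟨hBnG, B, hBG, rfl⟩
    · exact hcross A' hAF B' hBG
    · exact crossHalf hcross hAF hcAF hBG
  · rcases hB' with ⟨hBG, hcBG⟩ | ⟨hBnG, B, hBG, rfl⟩
    · rw [inter_comm]
      exact crossHalf hcross' hBG hcBG hAF
    · -- both moved
      by_cases hAm : i ∈ A ∨ j ∉ A
      · rw [compress_eq_self A hAm] at *
        exact absurd hAF hAnF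
      · push_neg at hAm
        by_cases hBm : i ∈ B ∨ j ∉ B
        · rw [compress_eq_self B hBm] at *
          exact absurd hBG hBnG
        · push_neg at hBm
          rw [compress_eq A hAm.1 hAm.2, compress_eq B hBm.1 hBm.2]
          obtain ⟨x, hx⟩ := hcross A hAF B hBG
          rw [mem_inter] at hx
          by_cases hxj : x = j
          · exact ⟨i, mem_inter.mpr ⟨mem_insert_self _ _, mem_insert_self _ _⟩⟩
          · exact ⟨x, mem_inter.mpr ⟨mem_insert_of_mem (mem_erase.mpr ⟨hxj, hx.1⟩),
              mem_insert_of_mem (mem_erase.mpr ⟨hxj, hx.2⟩)⟩⟩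

lemma compression_subset_powersetCard {i j n k : ℕ} {F : Finset (Finset ℕ)}
    (hF : F ⊆ (Finset.Icc 1 n).powersetCard k) (hi1 : 1 ≤ i) (hin : i ≤ n) :
    UV.compression {i} {j} F ⊆ (Finset.Icc 1 n).powersetCard k := by
  intro A' hA'
  rw [UV.mem_compression] at hA'
  rcases hA' with ⟨hAF, _⟩ | ⟨_, A, hAF, rfl⟩
  · exact hF hAF
  · by_cases hAm : i ∈ A ∨ j ∉ A
    · rw [compress_eq_self A hAm]; exact hF hAF
    · push_neg at hAm
      obtain ⟨hiA, hjA⟩ := hAm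
      rw [compress_eq A hiA hjA]
      have h := hF hAF
      rw [mem_powersetCard] at h ⊢
      constructor
      · intro x hx
        rcases mem_insert.mp hx with rfl | hx'
        · exact Finset.mem_Icc.mpr ⟨hi1, hin⟩
        · exact h.1 (Finset.erase_subset _ _ hx')
      · rw [card_insert_of_notMem (fun hc => hiA (Finset.erase_subset _ _ hc)),
          card_erase_of_mem hjA]
        have : 1 ≤ A.card := Finset.card_pos.mpr ⟨j, hjA⟩
        omega



def mu (F : Finset (Finset ℕ)) : ℕ := ∑ A ∈ F, ∑ x ∈ A, x

lemma compression_eq_union {i j : ℕ} (F : Finset (Finset ℕ)) :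
    UV.compression {i} {j} F =
      (F.filter (fun A => UV.compress {i} {j} A ∈ F)) ∪
      ((F.filter (fun A => UV.compress {i} {j} A ∉ F)).image (UV.compress {i} {j})) := by
  rw [UV.compression]
  congr 1
  ext x
  simp only [mem_filter, mem_image]
  constructor
  · rintro ⟨⟨b, hb, rfl⟩, hx⟩
    exact ⟨b, ⟨hb, hx⟩, rfl⟩
  · rintro ⟨b, ⟨hb, hbc⟩, rfl⟩
    exact ⟨⟨b, hb, rfl⟩, hbc⟩

lemma mu_compression {i j : ℕ} (hij : i < j) (F : Finset (Finset ℕ)) :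
    mu (UV.compression {i} {j} F) + (F.filter (fun A => UV.compress {i} {j} A ∉ F)).card * j
      = mu F + (F.filter (fun A => UV.compress {i} {j} A ∉ F)).card * i := by
  classical
  set c := UV.compress ({i} : Finset ℕ) {j} with hc
  set t := F.filter (fun A => c A ∉ F) with ht
  set s₁ := F.filter (fun A => c A ∈ F) with hs₁
  have hmoved : ∀ A ∈ t, i ∉ A ∧ j ∈ A := by
    intro A hA
    rw [ht, mem_filter] at hA
    by_contra hcon
    have : c A = A := compress_eq_self A (by tauto)
    rw [this] at hA
    exact hA.2 hA.1
  have hdisj : Disjoint s₁ (t.image c) := by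
    rw [Finset.disjoint_left]
    intro a ha hb
    rw [hs₁, mem_filter] at ha
    obtain ⟨b, hb', rfl⟩ := mem_image.mp hb
    rw [ht, mem_filter] at hb'
    exact hb'.2 ha.1
  have hinj : Set.InjOn c ↑t := by
    have := UV.compress_injOn (u := ({i} : Finset ℕ)) (v := ({j} : Finset ℕ)) (s := F)
    intro a ha b hb hab
    exact this ha hb hab
  have hsum : mu (UV.compression {i} {j} F) = ∑ A ∈ s₁, ∑ x ∈ A, x + ∑ A ∈ t, ∑ x ∈ c A, x := by
    rw [mu, compression_eq_union, Finset.sum_union hdisj, Finset.sum_image hinj]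
  have hw : ∀ A ∈ t, (∑ x ∈ c A, x) + j = (∑ x ∈ A, x) + i := by
    intro A hA
    obtain ⟨hiA, hjA⟩ := hmoved A hA
    rw [hc, compress_eq A hiA hjA, Finset.sum_insert (fun hcon => hiA (Finset.erase_subset _ _ hcon))]
    have := Finset.add_sum_erase A id hjA
    simp only [id] at this
    omega
  have hsplit : mu F = ∑ A ∈ s₁, ∑ x ∈ A, x + ∑ A ∈ t, ∑ x ∈ A, x := by
    rw [mu, hs₁, ht, Finset.sum_filter_add_sum_filter_not]
  have h2 : ∑ A ∈ t, ((∑ x ∈ c A, x) + j) = ∑ A ∈ t, ((∑ x ∈ A, x) + i) :=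
    Finset.sum_congr rfl hw
  rw [Finset.sum_add_distrib, Finset.sum_add_distrib, Finset.sum_const, smul_eq_mul] at h2
  rw [hsum, hsplit]
  simp only [Finset.sum_const, smul_eq_mul] at h2 ⊢
  omega

lemma mu_compression_le {i j : ℕ} (hij : i < j) (F : Finset (Finset ℕ)) :
    mu (UV.compression {i} {j} F) ≤ mu F := by
  have := mu_compression hij F
  nlinarith [Nat.mul_le_mul_left (F.filter (fun A => UV.compress {i} {j} A ∉ F)).card hij.le]

lemma compression_eq_of_filter_empty {i j : ℕ} (F : Finset (Finset ℕ))
    (h : F.filter (fun A => UV.compress {i} {j} A ∉ F) = ∅) :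
    UV.compression {i} {j} F = F := by
  rw [compression_eq_union, h, image_empty, union_empty]
  rw [Finset.filter_eq_self]
  intro A hA
  by_contra hcon
  have : A ∈ F.filter (fun A => UV.compress {i} {j} A ∉ F) := mem_filter.mpr ⟨hA, hcon⟩
  simp [h] at this

lemma mu_compression_lt {i j : ℕ} (hij : i < j) (F : Finset (Finset ℕ))
    (hne : UV.compression {i} {j} F ≠ F) :
    mu (UV.compression {i} {j} F) < mu F := by
  have hkey := mu_compression hij F
  set t := F.filter (fun A => UV.compress {i} {j} A ∉ F) with ht
  have htne : t.card ≠ 0 := by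
    intro hcon
    exact hne (compression_eq_of_filter_empty F (Finset.card_eq_zero.mp hcon))
  have h1 : 1 ≤ t.card := by omega
  have : t.card * i < t.card * j := by nlinarith
  omega

def Shifted (n : ℕ) (F : Finset (Finset ℕ)) : Prop :=
  ∀ i j : ℕ, 1 ≤ i → i < j → j ≤ n → UV.IsCompressed {i} {j} F

lemma shifted_mem {n : ℕ} {F : Finset (Finset ℕ)} (h : Shifted n F) {A : Finset ℕ} {i j : ℕ}
    (hA : A ∈ F) (h1 : 1 ≤ i) (hij : i < j) (hj : j ≤ n) (hjA : j ∈ A) (hiA : i ∉ A) :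
    insert i (A.erase j) ∈ F := by
  have h2 := UV.compress_mem_compression (u := ({i} : Finset ℕ)) (v := ({j} : Finset ℕ)) hA
  rw [(h i j h1 hij hj).eq] at h2
  rwa [compress_eq A hiA hjA] at h2

lemma frankl {n k l : ℕ} {F G : Finset (Finset ℕ)} (hSF : Shifted n F)
    (hF : F ⊆ (Finset.Icc 1 n).powersetCard k) (hG : G ⊆ (Finset.Icc 1 n).powersetCard l)
    (hcross : ∀ A ∈ F, ∀ B ∈ G, (A ∩ B).Nonempty)
    (hk : 1 ≤ k) (hl : 1 ≤ l) (hn : k + l ≤ n) :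
    ∀ A ∈ F, ∀ B ∈ G, (A ∩ B ∩ Finset.Icc 1 (k + l - 1)).Nonempty := by
  set m := k + l - 1 with hm
  have key : ∀ w : ℕ, ∀ A ∈ F, (A \ Finset.Icc 1 m).card = w →
      ∀ B ∈ G, (A ∩ B ∩ Finset.Icc 1 m).Nonempty := by
    intro w
    induction w using Nat.strong_induction_on with
    | _ w ih =>
      intro A hA hw B hB
      by_contra hcon
      rw [Finset.not_nonempty_iff_eq_empty] at hcon
      obtain ⟨hAsub, hAcard⟩ := mem_powersetCard.mp (hF hA)
      obtain ⟨hBsub, hBcard⟩ := mem_powersetCard.mp (hG hB)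
      by_cases hAm : A \ Finset.Icc 1 m = ∅
      · -- A ⊆ Icc 1 m
        have hAI : A ⊆ Finset.Icc 1 m := by
          intro x hx
          by_contra hx2
          exact absurd (Finset.mem_sdiff.mpr ⟨hx, hx2⟩) (by simp [hAm])
        obtain ⟨x, hx⟩ := hcross A hA B hB
        rw [mem_inter] at hx
        have : x ∈ A ∩ B ∩ Finset.Icc 1 m :=
          mem_inter.mpr ⟨mem_inter.mpr hx, hAI hx.1⟩
        simp [hcon] at this
      · by_cases hBm : B \ Finset.Icc 1 m = ∅
        · have hBI : B ⊆ Finset.Icc 1 m := by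
            intro x hx
            by_contra hx2
            exact absurd (Finset.mem_sdiff.mpr ⟨hx, hx2⟩) (by simp [hBm])
          obtain ⟨x, hx⟩ := hcross A hA B hB
          rw [mem_inter] at hx
          have : x ∈ A ∩ B ∩ Finset.Icc 1 m :=
            mem_inter.mpr ⟨mem_inter.mpr hx, hBI hx.2⟩
          simp [hcon] at this
        · -- both have elements above m
          obtain ⟨y, hy⟩ := Finset.nonempty_iff_ne_empty.mpr hAm
          rw [Finset.mem_sdiff] at hy
          have hyn : y ≤ n ∧ 1 ≤ y := by
            have := Finset.mem_Icc.mp (hAsub hy.1); omega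
          have hym : m < y := by
            have := hy.2
            rw [Finset.mem_Icc] at this
            omega
          -- cardinality of filtered parts
          have hsplitA : (A ∩ Finset.Icc 1 m).card + (A \ Finset.Icc 1 m).card = k := by
            rw [← hAcard, Finset.inter_comm]
            rw [← Finset.card_inter_add_card_sdiff A (Finset.Icc 1 m), Finset.inter_comm]
          have hsplitB : (B ∩ Finset.Icc 1 m).card + (B \ Finset.Icc 1 m).card = l := by
            rw [← hBcard]
            exact Finset.card_inter_add_card_sdiff B (Finset.Icc 1 m)
          have hAw : 1 ≤ (A \ Finset.Icc 1 m).card := Finset.card_pos.mpr ⟨y, Finset.mem_sdiff.mpr hy⟩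
          have hBw : 1 ≤ (B \ Finset.Icc 1 m).card :=
            Finset.card_pos.mpr (Finset.nonempty_iff_ne_empty.mpr hBm)
          -- find free slot
          have hfree : ∃ i ∈ Finset.Icc 1 m, i ∉ A ∧ i ∉ B := by
            by_contra hcon2
            push_neg at hcon2
            have hsub : Finset.Icc 1 m ⊆ (A ∩ Finset.Icc 1 m) ∪ (B ∩ Finset.Icc 1 m) := by
              intro x hx
              rcases Classical.em (x ∈ A) with h | h
              · exact Finset.mem_union_left _ (mem_inter.mpr ⟨h, hx⟩)
              · rcases Classical.em (x ∈ B) with h' | h'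
                · exact Finset.mem_union_right _ (mem_inter.mpr ⟨h', hx⟩)
                · exact absurd (hcon2 x hx) (by tauto)
            have h1 := Finset.card_le_card hsub
            have h2 := Finset.card_union_le (A ∩ Finset.Icc 1 m) (B ∩ Finset.Icc 1 m)
            rw [Nat.card_Icc] at h1
            omega
          obtain ⟨i, hiI, hiA, hiB⟩ := hfree
          rw [Finset.mem_Icc] at hiI
          have hiy : i < y := by omega
          have hA' : insert i (A.erase y) ∈ F :=
            shifted_mem hSF hA (by omega) hiy (by omega) hy.1 hiA
          have hcard' : ((insert i (A.erase y)) \ Finset.Icc 1 m).card < w := by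
            have he : (insert i (A.erase y)) \ Finset.Icc 1 m = (A \ Finset.Icc 1 m).erase y := by
              ext x
              simp only [Finset.mem_sdiff, Finset.mem_insert, Finset.mem_erase, Finset.mem_Icc]
              constructor
              · rintro ⟨rfl | ⟨hx1, hx2⟩, hx3⟩
                · omega
                · exact ⟨hx1, hx2, by omega⟩
              · rintro ⟨hx1, hx2, hx3⟩
                exact ⟨Or.inr ⟨hx1, hx2⟩, by omega⟩
            rw [he, Finset.card_erase_of_mem (Finset.mem_sdiff.mpr hy), hw]
            omega
          obtain ⟨x, hx⟩ := ih _ hcard' _ hA' rfl B hB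
          simp only [mem_inter, Finset.mem_insert, Finset.mem_erase] at hx
          rcases hx with ⟨⟨rfl | ⟨hx1, hx2⟩, hx3⟩, hx4⟩
          · exact hiB hx3
          · have : x ∈ A ∩ B ∩ Finset.Icc 1 m := by
              rw [mem_inter, mem_inter]; exact ⟨⟨hx2, hx3⟩, hx4⟩
            simp [hcon] at this
  intro A hA B hB
  exact key _ A hA rfl B hB

lemma exists_not_top {n k : ℕ} {F : Finset (Finset ℕ)} (hS : Shifted n F)
    (hF : F ⊆ (Finset.Icc 1 n).powersetCard k) (hk : k < n) (hne : F.Nonempty) :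
    ∃ A ∈ F, n ∉ A := by
  obtain ⟨A, hA⟩ := hne
  by_cases hnA : n ∈ A
  · obtain ⟨hAsub, hAcard⟩ := mem_powersetCard.mp (hF hA)
    have hex : ∃ i ∈ Finset.Icc 1 (n - 1), i ∉ A := by
      by_contra hcon
      push_neg at hcon
      have hsub : Finset.Icc 1 (n - 1) ⊆ A.erase n := by
        intro x hx
        have hx' := Finset.mem_Icc.mp hx
        exact Finset.mem_erase.mpr ⟨by omega, hcon x hx⟩
      have h1 := Finset.card_le_card hsub
      rw [Finset.card_erase_of_mem hnA, Nat.card_Icc, hAcard] at h1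
      have hn1 : 1 ≤ n := by omega
      have hk1 : 1 ≤ k := hAcard ▸ Finset.card_pos.mpr ⟨n, hnA⟩
      omega
    obtain ⟨i, hiI, hiA⟩ := hex
    have hi := Finset.mem_Icc.mp hiI
    have h1 : 1 ≤ n := by
      have := Finset.mem_Icc.mp (hAsub hnA); omega
    have hmem : insert i (A.erase n) ∈ F :=
      shifted_mem hS hA (by omega) (by omega) le_rfl hnA hiA
    refine ⟨_, hmem, ?_⟩
    simp only [Finset.mem_insert, Finset.mem_erase]
    push_neg
    exact ⟨by omega, fun h _ => h rfl⟩
  · exact ⟨A, hA, hnA⟩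

lemma pascal' {n k : ℕ} (hn : 1 ≤ n) (hk : 1 ≤ k) :
    n.choose k = (n - 1).choose (k - 1) + (n - 1).choose k := by
  obtain ⟨n', rfl⟩ : ∃ n', n = n' + 1 := ⟨n - 1, by omega⟩
  obtain ⟨k', rfl⟩ : ∃ k', k = k' + 1 := ⟨k - 1, by omega⟩
  simpa using Nat.choose_succ_succ' n' k'

lemma trivial_bound {N k l : ℕ} {F : Finset (Finset ℕ)} {B₀ : Finset ℕ}
    (hF : F ⊆ (Finset.Icc 1 N).powersetCard k) (hB : B₀ ⊆ Finset.Icc 1 N)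
    (hBcard : B₀.card = l) (hmeet : ∀ A ∈ F, (A ∩ B₀).Nonempty) :
    F.card ≤ N.choose k - (N - l).choose k := by
  have hsub : F ⊆ (Finset.Icc 1 N).powersetCard k \ (Finset.Icc 1 N \ B₀).powersetCard k := by
    intro A hA
    rw [Finset.mem_sdiff]
    refine ⟨hF hA, fun hcon => ?_⟩
    obtain ⟨hc1, _⟩ := mem_powersetCard.mp hcon
    obtain ⟨x, hx⟩ := hmeet A hA
    rw [mem_inter] at hx
    have := hc1 hx.1
    rw [Finset.mem_sdiff] at this
    exact this.2 hx.2
  have h1 := Finset.card_le_card hsub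
  rw [Finset.card_sdiff_of_subset (Finset.powersetCard_mono (Finset.sdiff_subset))] at h1
  rw [Finset.card_powersetCard, Finset.card_powersetCard, Finset.card_sdiff_of_subset hB, Nat.card_Icc,
    hBcard] at h1
  simpa using h1

lemma base_case {n k l : ℕ} (hl : 1 ≤ l) (hn : n = k + l) {F G : Finset (Finset ℕ)}
    (hF : F ⊆ (Finset.Icc 1 n).powersetCard k)
    (hG : G ⊆ (Finset.Icc 1 n).powersetCard l)
    (hcross : ∀ A ∈ F, ∀ B ∈ G, (A ∩ B).Nonempty) :
    F.card + G.card ≤ n.choose k := by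
  classical
  set G' := G.image (fun B => Finset.Icc 1 n \ B) with hG'
  have hGcard : G'.card = G.card := by
    apply Finset.card_image_of_injOn
    intro a ha b hb hab
    have ha' := (mem_powersetCard.mp (hG ha)).1
    have hb' := (mem_powersetCard.mp (hG hb)).1
    simp only at hab
    have : Finset.Icc 1 n \ (Finset.Icc 1 n \ a) = Finset.Icc 1 n \ (Finset.Icc 1 n \ b) := by
      rw [hab]
    rwa [Finset.sdiff_sdiff_self_left, Finset.sdiff_sdiff_self_left,
      Finset.inter_eq_right.mpr ha', Finset.inter_eq_right.mpr hb'] at this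
  have hG'sub : G' ⊆ (Finset.Icc 1 n).powersetCard k := by
    intro C hC
    obtain ⟨B, hB, rfl⟩ := Finset.mem_image.mp hC
    obtain ⟨hB1, hB2⟩ := mem_powersetCard.mp (hG hB)
    rw [mem_powersetCard]
    refine ⟨Finset.sdiff_subset, ?_⟩
    rw [Finset.card_sdiff_of_subset hB1, Nat.card_Icc, hB2]
    omega
  have hdisj : Disjoint F G' := by
    rw [Finset.disjoint_left]
    intro A hA hA'
    obtain ⟨B, hB, hBe⟩ := Finset.mem_image.mp hA'
    obtain ⟨x, hx⟩ := hcross A hA B hB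
    rw [mem_inter] at hx
    rw [← hBe] at hx
    have := Finset.mem_sdiff.mp hx.1
    exact this.2 hx.2
  have hunion : (F ∪ G').card ≤ ((Finset.Icc 1 n).powersetCard k).card :=
    Finset.card_le_card (Finset.union_subset hF hG'sub)
  rw [Finset.card_union_of_disjoint hdisj, hGcard] at hunion
  rwa [Finset.card_powersetCard, Nat.card_Icc] at hunion

lemma card_image_erase {n : ℕ} {H : Finset (Finset ℕ)} (h : ∀ A ∈ H, n ∈ A) :
    (H.image (fun A => A.erase n)).card = H.card := by
  apply Finset.card_image_of_injOn
  intro a ha b hb hab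
  simp only at hab
  rw [Finset.mem_coe] at ha hb
  have h2 := congrArg (insert n) hab
  rwa [Finset.insert_erase (h a ha), Finset.insert_erase (h b hb)] at h2

lemma image_erase_sub {n k : ℕ} {H : Finset (Finset ℕ)}
    (hH : H ⊆ (Finset.Icc 1 n).powersetCard k) (h : ∀ A ∈ H, n ∈ A) :
    H.image (fun A => A.erase n) ⊆ (Finset.Icc 1 (n-1)).powersetCard (k-1) := by
  intro A' hA'
  obtain ⟨A, hA, rfl⟩ := Finset.mem_image.mp hA'
  obtain ⟨h1, h2⟩ := mem_powersetCard.mp (hH hA)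
  rw [mem_powersetCard]
  constructor
  · intro x hx
    rw [Finset.mem_erase] at hx
    have hxx := Finset.mem_Icc.mp (h1 hx.2)
    have hxn := hx.1
    rw [Finset.mem_Icc]
    omega
  · rw [Finset.card_erase_of_mem (h A hA), h2]

theorem Taux (n k l : ℕ) (F G : Finset (Finset ℕ)) (hlk : l ≤ k) (hn : k + l ≤ n)
    (hF : F ⊆ (Finset.Icc 1 n).powersetCard k)
    (hG : G ⊆ (Finset.Icc 1 n).powersetCard l)
    (hFne : F.Nonempty) (hGne : G.Nonempty)
    (hcross : ∀ A ∈ F, ∀ B ∈ G, (A ∩ B).Nonempty) :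
    F.card + G.card ≤ n.choose k - (n - l).choose k + 1 := by
  rcases Nat.eq_zero_or_pos l with hl0 | hl1
  · exfalso
    obtain ⟨B, hB⟩ := hGne
    obtain ⟨A, hA⟩ := hFne
    have hBcard := (mem_powersetCard.mp (hG hB)).2
    rw [hl0, Finset.card_eq_zero] at hBcard
    obtain ⟨x, hx⟩ := hcross A hA B hB
    rw [hBcard] at hx
    simp at hx
  by_cases hsh : Shifted n F ∧ Shifted n G
  · -- shifted case
    rcases Nat.eq_or_lt_of_le hn with hbase | hlt
    · have h1 := base_case hl1 hbase.symm hF hG hcross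
      have h2 : (n - l).choose k = 1 := by
        have he : n - l = k := by omega
        rw [he, Nat.choose_self]
      omega
    · -- step case : k + l < n
      have hk1 : 1 ≤ k := by omega
      set F₀ := F.filter (fun A => ¬ n ∈ A) with hF₀
      set F₁ := F.filter (fun A => n ∈ A) with hF₁
      set G₀ := G.filter (fun B => ¬ n ∈ B) with hG₀
      set G₁ := G.filter (fun B => n ∈ B) with hG₁
      have hFsplit : F₁.card + F₀.card = F.card :=
        Finset.card_filter_add_card_filter_not (fun A => n ∈ A)
      have hGsplit : G₁.card + G₀.card = G.card :=
        Finset.card_filter_add_card_filter_not (fun B => n ∈ B)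
      have hF0sub : F₀ ⊆ (Finset.Icc 1 (n-1)).powersetCard k := by
        intro A hA
        rw [hF₀, Finset.mem_filter] at hA
        obtain ⟨h1, h2⟩ := mem_powersetCard.mp (hF hA.1)
        rw [mem_powersetCard]
        refine ⟨fun x hx => ?_, h2⟩
        have hxx := Finset.mem_Icc.mp (h1 hx)
        have hxn : x ≠ n := fun hc => hA.2 (hc ▸ hx)
        rw [Finset.mem_Icc]
        omega
      have hG0sub : G₀ ⊆ (Finset.Icc 1 (n-1)).powersetCard l := by
        intro B hB
        rw [hG₀, Finset.mem_filter] at hB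
        obtain ⟨h1, h2⟩ := mem_powersetCard.mp (hG hB.1)
        rw [mem_powersetCard]
        refine ⟨fun x hx => ?_, h2⟩
        have hxx := Finset.mem_Icc.mp (h1 hx)
        have hxn : x ≠ n := fun hc => hB.2 (hc ▸ hx)
        rw [Finset.mem_Icc]
        omega
      have hF0ne : F₀.Nonempty := by
        obtain ⟨A, hA, hnA⟩ := exists_not_top hsh.1 hF (by omega) hFne
        exact ⟨A, Finset.mem_filter.mpr ⟨hA, hnA⟩⟩
      have hG0ne : G₀.Nonempty := by
        obtain ⟨B, hB, hnB⟩ := exists_not_top hsh.2 hG (by omega) hGne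
        exact ⟨B, Finset.mem_filter.mpr ⟨hB, hnB⟩⟩
      have hcross00 : ∀ A ∈ F₀, ∀ B ∈ G₀, (A ∩ B).Nonempty := fun A hA B hB =>
        hcross A (Finset.mem_filter.mp hA).1 B (Finset.mem_filter.mp hB).1
      have hT0 := Taux (n-1) k l F₀ G₀ hlk (by omega) hF0sub hG0sub hF0ne hG0ne hcross00
      have e1 : n.choose k = (n-1).choose (k-1) + (n-1).choose k := pascal' (by omega) hk1
      have e2 : (n-l).choose k = (n-l-1).choose (k-1) + (n-l-1).choose k :=
        pascal' (n := n - l) (k := k) (by omega) hk1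
      have e0 : n - 1 - l = n - l - 1 := by omega
      rw [e0] at hT0
      have m1 : (n-l-1).choose k ≤ (n-1).choose k := Nat.choose_le_choose _ (by omega)
      have m2 : (n-l-1).choose (k-1) ≤ (n-1).choose (k-1) := Nat.choose_le_choose _ (by omega)
      have hmemF₁ : ∀ A ∈ F₁, n ∈ A := fun A hA => (Finset.mem_filter.mp hA).2
      have hmemG₁ : ∀ B ∈ G₁, n ∈ B := fun B hB => (Finset.mem_filter.mp hB).2
      by_cases hG1e : G₁ = ∅
      · -- G has no member containing n
        have hGG0 : G₀.card = G.card := by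
          rw [← hGsplit, hG1e]; simp
        set F₁' := F₁.image (fun A => A.erase n) with hF₁'
        have hF1card : F₁'.card = F₁.card := card_image_erase hmemF₁
        have hF1sub : F₁' ⊆ (Finset.Icc 1 (n-1)).powersetCard (k-1) :=
          image_erase_sub ((Finset.filter_subset _ F).trans hF) hmemF₁
        obtain ⟨B₀, hB₀⟩ := hGne
        have hB₀G₀ : B₀ ∈ G₀ := by
          rw [hG₀, Finset.mem_filter]
          refine ⟨hB₀, fun hc => ?_⟩
          have : B₀ ∈ G₁ := by rw [hG₁, Finset.mem_filter]; exact ⟨hB₀, hc⟩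
          rw [hG1e] at this
          simp at this
        obtain ⟨hB₀sub, hB₀card⟩ := mem_powersetCard.mp (hG0sub hB₀G₀)
        have hmeet : ∀ A' ∈ F₁', (A' ∩ B₀).Nonempty := by
          intro A' hA'
          rw [hF₁'] at hA'
          obtain ⟨A, hA, rfl⟩ := Finset.mem_image.mp hA'
          obtain ⟨x, hx⟩ := hcross A (Finset.mem_filter.mp hA).1 B₀ hB₀
          rw [mem_inter] at hx
          have hxn : x ≠ n := by
            intro hc; subst hc
            have := Finset.mem_Icc.mp (hB₀sub hx.2)
            omega
          exact ⟨x, mem_inter.mpr ⟨Finset.mem_erase.mpr ⟨hxn, hx.1⟩, hx.2⟩⟩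
        have hTB := trivial_bound hF1sub hB₀sub hB₀card hmeet
        rw [e0] at hTB
        omega
      · by_cases hF1e : F₁ = ∅
        · -- F has no member containing n, G₁ nonempty
          have hFF0 : F₀.card = F.card := by
            rw [← hFsplit, hF1e]; simp
          set G₁' := G₁.image (fun B => B.erase n) with hG₁'
          have hG1card : G₁'.card = G₁.card := card_image_erase hmemG₁
          have hG1sub : G₁' ⊆ (Finset.Icc 1 (n-1)).powersetCard (l-1) :=
            image_erase_sub ((Finset.filter_subset _ G).trans hG) hmemG₁
          obtain ⟨A₀, hA₀⟩ := hFne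
          have hA₀F₀ : A₀ ∈ F₀ := by
            rw [hF₀, Finset.mem_filter]
            refine ⟨hA₀, fun hc => ?_⟩
            have : A₀ ∈ F₁ := by rw [hF₁, Finset.mem_filter]; exact ⟨hA₀, hc⟩
            rw [hF1e] at this
            simp at this
          obtain ⟨hA₀sub, hA₀card⟩ := mem_powersetCard.mp (hF0sub hA₀F₀)
          have hmeet : ∀ B' ∈ G₁', (B' ∩ A₀).Nonempty := by
            intro B' hB'
            rw [hG₁'] at hB'
            obtain ⟨B, hB, rfl⟩ := Finset.mem_image.mp hB'
            obtain ⟨x, hx⟩ := hcross A₀ hA₀ B (Finset.mem_filter.mp hB).1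
            rw [mem_inter] at hx
            have hxn : x ≠ n := by
              intro hc; subst hc
              have := Finset.mem_Icc.mp (hA₀sub hx.1)
              omega
            exact ⟨x, mem_inter.mpr ⟨Finset.mem_erase.mpr ⟨hxn, hx.2⟩, hx.1⟩⟩
          have hTB := trivial_bound hG1sub hA₀sub hA₀card hmeet
          have e0k : n - 1 - k = n - k - 1 := by omega
          rw [e0k] at hTB
          have hP := chooseP hl1 hlk (m := n-1) (by omega)
          have e0l : n - 1 - l = n - l - 1 := by omega
          rw [e0l, e0k] at hP
          have m3 : (n-k-1).choose (l-1) ≤ (n-1).choose (l-1) := Nat.choose_le_choose _ (by omega)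
          omega
        · -- both F₁ and G₁ nonempty
          have hl2 : 2 ≤ l := by
            by_contra hc
            have hl1' : l = 1 := by omega
            obtain ⟨B, hB⟩ := Finset.nonempty_iff_ne_empty.mpr hG1e
            have hBmem := Finset.mem_filter.mp hB
            have hBcard := (mem_powersetCard.mp (hG hBmem.1)).2
            rw [hl1'] at hBcard
            obtain ⟨a, hae⟩ := Finset.card_eq_one.mp hBcard
            have han : a = n := by
              have := hBmem.2
              rw [hae, Finset.mem_singleton] at this
              omega
            obtain ⟨A, hA⟩ := hF0ne
            have hAm := Finset.mem_filter.mp hA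
            obtain ⟨x, hx⟩ := hcross A hAm.1 B hBmem.1
            rw [hae, han, mem_inter, Finset.mem_singleton] at hx
            exact hAm.2 (hx.2 ▸ hx.1)
          have hk2 : 2 ≤ k := le_trans hl2 hlk
          set F₁' := F₁.image (fun A => A.erase n) with hF₁'
          set G₁' := G₁.image (fun B => B.erase n) with hG₁'
          have hF1card : F₁'.card = F₁.card := card_image_erase hmemF₁
          have hG1card : G₁'.card = G₁.card := card_image_erase hmemG₁
          have hF1sub : F₁' ⊆ (Finset.Icc 1 (n-1)).powersetCard (k-1) :=
            image_erase_sub ((Finset.filter_subset _ F).trans hF) hmemF₁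
          have hG1sub : G₁' ⊆ (Finset.Icc 1 (n-1)).powersetCard (l-1) :=
            image_erase_sub ((Finset.filter_subset _ G).trans hG) hmemG₁
          have hF1ne : F₁'.Nonempty :=
            (Finset.nonempty_iff_ne_empty.mpr hF1e).image _
          have hG1ne : G₁'.Nonempty :=
            (Finset.nonempty_iff_ne_empty.mpr hG1e).image _
          have hfr := frankl hsh.1 hF hG hcross (by omega) (by omega) hn
          have hcross11 : ∀ A' ∈ F₁', ∀ B' ∈ G₁', (A' ∩ B').Nonempty := by
            intro A' hA' B' hB'
            rw [hF₁'] at hA'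
            rw [hG₁'] at hB'
            obtain ⟨A, hA, rfl⟩ := Finset.mem_image.mp hA'
            obtain ⟨B, hB, rfl⟩ := Finset.mem_image.mp hB'
            obtain ⟨x, hx⟩ := hfr A (Finset.mem_filter.mp hA).1 B (Finset.mem_filter.mp hB).1
            simp only [mem_inter, Finset.mem_Icc] at hx
            have hxn : x ≠ n := by omega
            exact ⟨x, mem_inter.mpr ⟨Finset.mem_erase.mpr ⟨hxn, hx.1.1⟩,
              Finset.mem_erase.mpr ⟨hxn, hx.1.2⟩⟩⟩
          have hT1 := Taux (n-1) (k-1) (l-1) F₁' G₁' (by omega) (by omega)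
            hF1sub hG1sub hF1ne hG1ne hcross11
          have e0' : n - 1 - (l - 1) = n - l := by omega
          rw [e0'] at hT1
          have e3 := pascal' (n := n-l) (k := k-1) (by omega) (by omega)
          have ek : k - 1 - 1 = k - 2 := by omega
          rw [ek] at e3
          have h4 : 1 ≤ (n-l-1).choose (k-2) := Nat.choose_pos (by omega)
          have m4 : (n-l).choose (k-1) ≤ (n-1).choose (k-1) := Nat.choose_le_choose _ (by omega)
          omega
  · -- not shifted: compress
    have hex : ∃ i j : ℕ, 1 ≤ i ∧ i < j ∧ j ≤ n ∧
        ¬(UV.IsCompressed {i} {j} F ∧ UV.IsCompressed {i} {j} G) := by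
      by_contra hcon
      push_neg at hcon
      refine hsh ⟨fun i j h1 h2 h3 => ?_, fun i j h1 h2 h3 => ?_⟩
      · exact ((hcon i j h1 h2 h3).1)
      · exact ((hcon i j h1 h2 h3).2)
    obtain ⟨i, j, hi1, hij, hjn, hnc⟩ := hex
    have hmulow : mu (UV.compression {i} {j} F) + mu (UV.compression {i} {j} G) < mu F + mu G := by
      rcases Classical.em (UV.IsCompressed {i} {j} F) with hcF | hcF
      · have hcG : ¬ UV.IsCompressed {i} {j} G := fun h => hnc ⟨hcF, h⟩
        have h2 := mu_compression_lt hij G hcG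
        have h3 : UV.compression {i} {j} F = F := hcF
        rw [h3]
        omega
      · have h2 := mu_compression_lt hij F hcF
        have h3 := mu_compression_le hij G
        omega
    have hFne' : (UV.compression {i} {j} F).Nonempty := by
      rw [← Finset.card_pos, UV.card_compression]
      exact Finset.card_pos.mpr hFne
    have hGne' : (UV.compression {i} {j} G).Nonempty := by
      rw [← Finset.card_pos, UV.card_compression]
      exact Finset.card_pos.mpr hGne
    have hres := Taux n k l (UV.compression {i} {j} F) (UV.compression {i} {j} G) hlk hn
      (compression_subset_powersetCard hF hi1 (by omega))
      (compression_subset_powersetCard hG hi1 (by omega))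
      hFne' hGne' (cross_compression hcross)
    rwa [UV.card_compression, UV.card_compression] at hres
termination_by (n, mu F + mu G)
decreasing_by
  · exact Prod.Lex.left _ _ (by omega)
  · exact Prod.Lex.left _ _ (by omega)
  · exact Prod.Lex.right _ hmulow

end CrossInt

theorem stmt_1 (n k l : ℕ) (hl : 2 ≤ l) (hlk : l ≤ k) (hn : k + l ≤ n)
    (F G : Finset (Finset ℕ))
    (hF : F ⊆ (Finset.Icc 1 n).powersetCard k)
    (hG : G ⊆ (Finset.Icc 1 n).powersetCard l)
    (hFne : F.Nonempty) (hGne : G.Nonempty)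
    (hcross : ∀ A ∈ F, ∀ B ∈ G, (A ∩ B).Nonempty) :
    F.card + G.card ≤ n.choose k - (n - l).choose k + 1 := by
  exact CrossInt.Taux n k l F G hlk hn hF hG hFne hGne hcross
end

section
/- Let k ≥ 2, t ≥ 0 and n ≥ 2k + t. Let F ⊆ binom([n], k+t) and G ⊆ binom([n], k) be cross-intersecting families such that F is non-empty and (t+1)-intersecting. Then |F| + |G| ≤ C(n,k) - C(n-k-t,k) + 1. -/
open Finset

/-! Auxiliary development for the Frankl–Tokushige cross-intersecting theorem. -/

namespace Stmt2Aux

/-- `𝓐` is a shifted (left-compressed) family on ground set `{1,…,n}`. -/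
def Shifted (n : ℕ) (𝓐 : Finset (Finset ℕ)) : Prop :=
  ∀ i j : ℕ, 1 ≤ i → i < j → j ≤ n → ∀ A ∈ 𝓐, j ∈ A → i ∉ A →
    insert i (A.erase j) ∈ 𝓐

/-- the (i,j)-shift of a single set, relative to a family. -/
noncomputable def mv (i j : ℕ) (𝓕 : Finset (Finset ℕ)) (A : Finset ℕ) : Finset ℕ :=
  if j ∈ A ∧ i ∉ A ∧ insert i (A.erase j) ∉ 𝓕 then insert i (A.erase j) else A

/-- the (i,j)-compression of a family. -/
noncomputable def comp (i j : ℕ) (𝓕 : Finset (Finset ℕ)) : Finset (Finset ℕ) :=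
  𝓕.image (mv i j 𝓕)

lemma card_insert_erase {A : Finset ℕ} {i j : ℕ} (hj : j ∈ A) (hi : i ∉ A) (hij : i ≠ j) :
    (insert i (A.erase j)).card = A.card := by
  rw [card_insert_of_notMem (fun h => hi (mem_of_mem_erase h)), card_erase_of_mem hj]
  have : 1 ≤ A.card := card_pos.2 ⟨j, hj⟩
  omega

lemma mem_insert_erase {A : Finset ℕ} {i j x : ℕ} :
    x ∈ insert i (A.erase j) ↔ x = i ∨ (x ∈ A ∧ x ≠ j) := by
  simp [mem_insert, mem_erase, and_comm]

lemma mv_card {i j : ℕ} {𝓕 : Finset (Finset ℕ)} {A : Finset ℕ} (hij : i ≠ j) :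
    (mv i j 𝓕 A).card = A.card := by
  unfold mv
  split_ifs with h
  · exact card_insert_erase h.1 h.2.1 hij
  · rfl

lemma mv_subset {n i j : ℕ} {𝓕 : Finset (Finset ℕ)} {A : Finset ℕ}
    (hi1 : 1 ≤ i) (hin : i ≤ n) (hA : A ⊆ Icc 1 n) : mv i j 𝓕 A ⊆ Icc 1 n := by
  unfold mv
  split_ifs with h
  · intro x hx
    rcases mem_insert_erase.1 hx with rfl | ⟨hxA, _⟩
    · exact mem_Icc.2 ⟨hi1, hin⟩
    · exact hA hxA
  · exact hA

lemma mv_injOn {i j : ℕ} {𝓕 : Finset (Finset ℕ)} (hij : i ≠ j) :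
    Set.InjOn (mv i j 𝓕) ↑𝓕 := by
  intro A hA B hB hAB
  simp only [mem_coe] at hA hB
  unfold mv at hAB
  split_ifs at hAB with h1 h2 h2
  · -- both moved
    have hA' : A = insert j ((insert i (A.erase j)).erase i) := by
      rw [erase_insert (fun h => h1.2.1 (mem_of_mem_erase h)), insert_erase h1.1]
    have hB' : B = insert j ((insert i (B.erase j)).erase i) := by
      rw [erase_insert (fun h => h2.2.1 (mem_of_mem_erase h)), insert_erase h2.1]
    rw [hA', hB', hAB]
  · -- A moved, B not: LHS ∉ 𝓕 but RHS = B ∈ 𝓕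
    exact absurd (hAB ▸ hB) h1.2.2
  · exact absurd (hAB ▸ hA) h2.2.2
  · exact hAB

lemma comp_card {i j : ℕ} {𝓕 : Finset (Finset ℕ)} (hij : i ≠ j) :
    (comp i j 𝓕).card = 𝓕.card :=
  card_image_of_injOn (mv_injOn hij)

lemma comp_subset_powersetCard {n a i j : ℕ} {𝓕 : Finset (Finset ℕ)}
    (hi1 : 1 ≤ i) (hij : i < j) (hjn : j ≤ n)
    (h𝓕 : 𝓕 ⊆ (Icc 1 n).powersetCard a) :
    comp i j 𝓕 ⊆ (Icc 1 n).powersetCard a := by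
  intro A' hA'
  obtain ⟨A, hA, rfl⟩ := mem_image.1 hA'
  obtain ⟨hsub, hcard⟩ := mem_powersetCard.1 (h𝓕 hA)
  exact mem_powersetCard.2 ⟨mv_subset hi1 (le_of_lt (lt_of_lt_of_le hij hjn)) hsub,
    by rw [mv_card hij.ne]; exact hcard⟩

/-- key intersection computation: both sets moved. -/
lemma inter_both_moved {A B : Finset ℕ} {i j : ℕ} (hij : i ≠ j)
    (hjA : j ∈ A) (hiA : i ∉ A) (hjB : j ∈ B) (hiB : i ∉ B) :
    ((insert i (A.erase j)) ∩ (insert i (B.erase j))).card = (A ∩ B).card := by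
  have he : (insert i (A.erase j)) ∩ (insert i (B.erase j))
      = insert i ((A ∩ B).erase j) := by
    ext x
    simp only [mem_inter, mem_insert_erase]
    tauto
  rw [he, card_insert_erase (mem_inter.2 ⟨hjA, hjB⟩) (fun h => hiA (mem_inter.1 h).1) hij]

/-- A moved, B untouched, j ∉ B : intersection only grows. -/
lemma inter_moved_jnotB {A B : Finset ℕ} {i j : ℕ}
    (hjB : j ∉ B) : (A ∩ B).card ≤ ((insert i (A.erase j)) ∩ B).card := by
  apply card_le_card
  intro x hx
  rw [mem_inter] at hx
  exact mem_inter.2 ⟨mem_insert_erase.2 (Or.inr ⟨hx.1, fun h => hjB (h ▸ hx.2)⟩), hx.2⟩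

/-- A moved, B untouched, j ∈ B, i ∈ B. -/
lemma inter_moved_iB {A B : Finset ℕ} {i j : ℕ} (hij : i ≠ j)
    (hjA : j ∈ A) (hiA : i ∉ A) (hjB : j ∈ B) (hiB : i ∈ B) :
    ((insert i (A.erase j)) ∩ B).card = (A ∩ B).card := by
  have he : (insert i (A.erase j)) ∩ B = insert i ((A ∩ B).erase j) := by
    ext x
    simp only [mem_inter, mem_insert_erase]
    by_cases hx : x = i <;> simp [hx, hiB] <;> tauto
  rw [he, card_insert_erase (mem_inter.2 ⟨hjA, hjB⟩) (fun h => hiA (mem_inter.1 h).1) hij]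

/-- A moved, B untouched with j ∈ B, i ∉ B : compare with the shift of B. -/
lemma inter_moved_shiftB {A B : Finset ℕ} {i j : ℕ}
    (hiA : i ∉ A) (hiB : i ∉ B) :
    (insert i (A.erase j)) ∩ B = A ∩ (insert i (B.erase j)) := by
  ext x
  simp only [mem_inter, mem_insert_erase]
  constructor
  · rintro ⟨(rfl | ⟨hxA, hxj⟩), hxB⟩
    · exact absurd hxB hiB
    · exact ⟨hxA, Or.inr ⟨hxB, hxj⟩⟩
  · rintro ⟨hxA, (rfl | ⟨hxB, hxj⟩)⟩
    · exact absurd hxA hiA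
    · exact ⟨Or.inr ⟨hxA, hxj⟩, hxB⟩

/-- One-sided step: A moved, B an untouched member of 𝓑. -/
lemma cross_step {s i j : ℕ} {𝓐 𝓑 : Finset (Finset ℕ)} {A B : Finset ℕ}
    (h : ∀ A ∈ 𝓐, ∀ B ∈ 𝓑, s ≤ (A ∩ B).card) (hij : i ≠ j)
    (hA : A ∈ 𝓐) (hB : B ∈ 𝓑) (hjA : j ∈ A) (hiA : i ∉ A)
    (hBun : j ∈ B → i ∉ B → insert i (B.erase j) ∈ 𝓑) :
    s ≤ ((insert i (A.erase j)) ∩ B).card := by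
  by_cases hjB : j ∈ B
  · by_cases hiB : i ∈ B
    · rw [inter_moved_iB hij hjA hiA hjB hiB]; exact h A hA B hB
    · rw [inter_moved_shiftB hiA hiB]
      exact h A hA _ (hBun hjB hiB)
  · exact le_trans (h A hA B hB) (inter_moved_jnotB hjB)

/-- compression (applied simultaneously) preserves `s`-cross-intersection. -/
lemma comp_cross {s i j : ℕ} {𝓐 𝓑 : Finset (Finset ℕ)}
    (h : ∀ A ∈ 𝓐, ∀ B ∈ 𝓑, s ≤ (A ∩ B).card) (hij : i < j) :
    ∀ A' ∈ comp i j 𝓐, ∀ B' ∈ comp i j 𝓑, s ≤ (A' ∩ B').card := by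
  intro A' hA' B' hB'
  obtain ⟨A, hA, rfl⟩ := mem_image.1 hA'
  obtain ⟨B, hB, rfl⟩ := mem_image.1 hB'
  unfold mv
  split_ifs with h1 h2 h2
  · rw [inter_both_moved hij.ne h1.1 h1.2.1 h2.1 h2.2.1]; exact h A hA B hB
  · refine cross_step h hij.ne hA hB h1.1 h1.2.1 (fun hjB hiB => ?_)
    by_contra hc
    exact h2 ⟨hjB, hiB, hc⟩
  · rw [inter_comm]
    refine cross_step (fun B hB A hA => by rw [inter_comm]; exact h A hA B hB)
      hij.ne hB hA h2.1 h2.2.1 (fun hjA hiA => ?_)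
    by_contra hc
    exact h1 ⟨hjA, hiA, hc⟩
  · exact h A hA B hB

/-- measure of a family -/
noncomputable def meas (𝓕 : Finset (Finset ℕ)) : ℕ := ∑ A ∈ 𝓕, ∑ x ∈ A, x

lemma meas_comp_le {i j : ℕ} {𝓕 : Finset (Finset ℕ)} (hij : i < j) :
    meas (comp i j 𝓕) ≤ meas 𝓕 := by
  unfold meas comp
  rw [sum_image (fun x hx y hy hxy => mv_injOn hij.ne (mem_coe.2 hx) (mem_coe.2 hy) hxy)]
  apply sum_le_sum
  intro A hA
  unfold mv
  split_ifs with h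
  · have h1 : j + ∑ x ∈ A.erase j, x = ∑ x ∈ A, x := add_sum_erase A id h.1
    have h2 : ∑ x ∈ insert i (A.erase j), x = i + ∑ x ∈ A.erase j, x :=
      sum_insert (fun hc => h.2.1 (mem_of_mem_erase hc))
    omega
  · exact le_refl _

lemma meas_comp_lt {i j : ℕ} {𝓕 : Finset (Finset ℕ)} (hij : i < j)
    (hviol : ∃ A ∈ 𝓕, j ∈ A ∧ i ∉ A ∧ insert i (A.erase j) ∉ 𝓕) :
    meas (comp i j 𝓕) < meas 𝓕 := by
  unfold meas comp
  rw [sum_image (fun x hx y hy hxy => mv_injOn hij.ne (mem_coe.2 hx) (mem_coe.2 hy) hxy)]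
  obtain ⟨A0, hA0, hA0v⟩ := hviol
  apply sum_lt_sum
  · intro A hA
    unfold mv
    split_ifs with h
    · have h1 : j + ∑ x ∈ A.erase j, x = ∑ x ∈ A, x := add_sum_erase A id h.1
      have h2 : ∑ x ∈ insert i (A.erase j), x = i + ∑ x ∈ A.erase j, x :=
        sum_insert (fun hc => h.2.1 (mem_of_mem_erase hc))
      omega
    · exact le_refl _
  · refine ⟨A0, hA0, ?_⟩
    unfold mv
    rw [if_pos ⟨hA0v.1, hA0v.2.1, hA0v.2.2⟩]
    have h1 : j + ∑ x ∈ A0.erase j, x = ∑ x ∈ A0, x := add_sum_erase A0 id hA0v.1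
    have h2 : ∑ x ∈ insert i (A0.erase j), x = i + ∑ x ∈ A0.erase j, x :=
      sum_insert (fun hc => hA0v.2.1 (mem_of_mem_erase hc))
    omega

/-- Existence of a simultaneous shifting of the pair of families. -/
lemma shift_exists (n a b s : ℕ) :
    ∀ (N : ℕ) (F G : Finset (Finset ℕ)), meas F + meas G ≤ N →
    F ⊆ (Icc 1 n).powersetCard a → G ⊆ (Icc 1 n).powersetCard b →
    (∀ A ∈ F, ∀ B ∈ F, s ≤ (A ∩ B).card) →
    (∀ A ∈ F, ∀ B ∈ G, 1 ≤ (A ∩ B).card) →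
    ∃ F' G' : Finset (Finset ℕ),
      F'.card = F.card ∧ G'.card = G.card ∧
      F' ⊆ (Icc 1 n).powersetCard a ∧ G' ⊆ (Icc 1 n).powersetCard b ∧
      (∀ A ∈ F', ∀ B ∈ F', s ≤ (A ∩ B).card) ∧
      (∀ A ∈ F', ∀ B ∈ G', 1 ≤ (A ∩ B).card) ∧
      Shifted n F' ∧ Shifted n G' := by
  intro N
  induction N using Nat.strong_induction_on with
  | _ N ih =>
    intro F G hm hF hG hint hcross
    by_cases hsh : Shifted n F ∧ Shifted n G
    · exact ⟨F, G, rfl, rfl, hF, hG, hint, hcross, hsh.1, hsh.2⟩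
    · -- find a violating pair
      have hviol : ∃ i j : ℕ, 1 ≤ i ∧ i < j ∧ j ≤ n ∧
          ((∃ A ∈ F, j ∈ A ∧ i ∉ A ∧ insert i (A.erase j) ∉ F) ∨
           (∃ A ∈ G, j ∈ A ∧ i ∉ A ∧ insert i (A.erase j) ∉ G)) := by
        by_contra hc
        push_neg at hc
        exact hsh ⟨fun i j h1 h2 h3 => (hc i j h1 h2 h3).1,
          fun i j h1 h2 h3 => (hc i j h1 h2 h3).2⟩
      obtain ⟨i, j, hi1, hij, hjn, hv⟩ := hviol
      have hlt : meas (comp i j F) + meas (comp i j G) < meas F + meas G := by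
        rcases hv with hvF | hvG
        · have := meas_comp_lt hij hvF
          have := meas_comp_le (𝓕 := G) hij
          omega
        · have := meas_comp_lt hij hvG
          have := meas_comp_le (𝓕 := F) hij
          omega
      have hmlt : meas (comp i j F) + meas (comp i j G) < N := lt_of_lt_of_le hlt hm
      obtain ⟨F', G', h1, h2, h3, h4, h5, h6, h7, h8⟩ :=
        ih _ hmlt (comp i j F) (comp i j G) (le_refl _)
          (comp_subset_powersetCard hi1 hij hjn hF)
          (comp_subset_powersetCard hi1 hij hjn hG)
          (comp_cross hint hij) (comp_cross hcross hij)
      exact ⟨F', G', h1.trans (comp_card hij.ne), h2.trans (comp_card hij.ne),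
        h3, h4, h5, h6, h7, h8⟩

end Stmt2Aux
section PART2
open Finset Stmt2Aux
namespace Stmt2Aux

lemma exists_fresh {n : ℕ} {S : Finset ℕ} (hS : S ⊆ Icc 1 n) (h : S.card < n) :
    ∃ j, 1 ≤ j ∧ j ≤ n ∧ j ∉ S := by
  have hIcc : (Icc 1 n).card = n := by rw [Nat.card_Icc]; omega
  have hns : ¬ (Icc 1 n ⊆ S) := fun hc => absurd (card_le_card hc) (by omega)
  obtain ⟨j, hj1, hj2⟩ := not_subset.1 hns
  exact ⟨j, (mem_Icc.1 hj1).1, (mem_Icc.1 hj1).2, hj2⟩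

lemma count_disjoint {X A : Finset ℕ} {m : ℕ} (hA : A ⊆ X) (G : Finset (Finset ℕ))
    (hG : G ⊆ X.powersetCard m) (hmeets : ∀ B ∈ G, 1 ≤ (B ∩ A).card) :
    G.card + (X.card - A.card).choose m ≤ X.card.choose m := by
  have hdisj : Disjoint G ((X \ A).powersetCard m) := by
    rw [disjoint_left]
    intro B hB hB'
    have h1 := hmeets B hB
    have h2 : B ⊆ X \ A := (mem_powersetCard.1 hB').1
    have : B ∩ A = ∅ := by
      rw [← subset_empty]
      intro x hx
      rw [mem_inter] at hx
      exact absurd hx.2 (mem_sdiff.1 (h2 hx.1)).2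
    rw [this] at h1
    simp at h1
  have hsub : G ∪ (X \ A).powersetCard m ⊆ X.powersetCard m := by
    apply union_subset hG
    intro B hB
    rw [mem_powersetCard] at hB ⊢
    exact ⟨hB.1.trans sdiff_subset, hB.2⟩
  have := card_le_card hsub
  rw [card_union_of_disjoint hdisj, card_powersetCard, card_powersetCard, card_sdiff_of_subset hA] at this
  exact this

end Stmt2Aux
end PART2
section PART3
open Finset
namespace Stmt2Aux

variable {n a : ℕ} {F : Finset (Finset ℕ)}

lemma filter_ground (hF : F ⊆ (Icc 1 n).powersetCard a) :
    F.filter (fun A => n ∉ A) ⊆ (Icc 1 (n-1)).powersetCard a := by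
  intro A hA
  rw [mem_filter] at hA
  obtain ⟨hsub, hcard⟩ := mem_powersetCard.1 (hF hA.1)
  refine mem_powersetCard.2 ⟨fun x hx => ?_, hcard⟩
  have := mem_Icc.1 (hsub hx)
  have : x ≠ n := fun h => hA.2 (h ▸ hx)
  rw [mem_Icc]
  omega

lemma erased_ground {a' : ℕ} (hF : F ⊆ (Icc 1 n).powersetCard a) (ha : a = a' + 1) :
    (F.filter (fun A => n ∈ A)).image (fun A => A.erase n)
      ⊆ (Icc 1 (n-1)).powersetCard a' := by
  intro A' hA'
  obtain ⟨A, hA, rfl⟩ := mem_image.1 hA'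
  rw [mem_filter] at hA
  obtain ⟨hsub, hcard⟩ := mem_powersetCard.1 (hF hA.1)
  refine mem_powersetCard.2 ⟨fun x hx => ?_, ?_⟩
  · rw [mem_erase] at hx
    have := mem_Icc.1 (hsub hx.2)
    rw [mem_Icc]
    have := hx.1
    omega
  · rw [card_erase_of_mem hA.2, hcard, ha]; omega

lemma card_split (n : ℕ) (F : Finset (Finset ℕ)) :
    F.card = (F.filter (fun A => n ∉ A)).card
      + ((F.filter (fun A => n ∈ A)).image (fun A => A.erase n)).card := by
  have himg : ((F.filter (fun A => n ∈ A)).image (fun A => A.erase n)).card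
      = (F.filter (fun A => n ∈ A)).card := by
    apply card_image_of_injOn
    intro A hA B hB hAB
    simp only [coe_filter, Set.mem_setOf_eq] at hA hB
    simp only at hAB
    rw [← insert_erase hA.2, ← insert_erase hB.2, hAB]
  rw [himg]
  have := card_filter_add_card_filter_not (s := F) (p := fun A => n ∈ A)
  omega

lemma shifted_filter (h : Shifted n F) :
    Shifted (n-1) (F.filter (fun A => n ∉ A)) := by
  intro i j hi hij hj A hA hjA hiA
  rw [mem_filter] at hA
  have hjn : j ≤ n := by omega
  have hres := h i j hi hij hjn A hA.1 hjA hiA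
  rw [mem_filter]
  refine ⟨hres, fun hc => ?_⟩
  rcases mem_insert.1 hc with h1 | h1
  · omega
  · exact hA.2 (mem_of_mem_erase h1)

lemma shifted_erase (h : Shifted n F) :
    Shifted (n-1) ((F.filter (fun A => n ∈ A)).image (fun A => A.erase n)) := by
  intro i j hi hij hj A' hA' hjA' hiA'
  obtain ⟨A, hA, rfl⟩ := mem_image.1 hA'
  rw [mem_filter] at hA
  have hin : i < n := by omega
  have hjnn : j < n := by omega
  have hiA : i ∉ A := fun hc => hiA' (mem_erase.2 ⟨by omega, hc⟩)
  have hjA : j ∈ A := mem_of_mem_erase hjA'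
  have hres := h i j hi hij (by omega) A hA.1 hjA hiA
  refine mem_image.2 ⟨insert i (A.erase j), mem_filter.2 ⟨hres, ?_⟩, ?_⟩
  · exact mem_insert.2 (Or.inr (mem_erase.2 ⟨by omega, hA.2⟩))
  · rw [erase_insert_of_ne (by omega : i ≠ n)]
    congr 1
    ext x
    simp only [mem_erase]
    tauto

/-- S3 : the part of a shifted nonempty family avoiding n is nonempty. -/
lemma filter_nonempty (h : Shifted n F) (hF : F ⊆ (Icc 1 n).powersetCard a)
    (hne : F.Nonempty) (han : a < n) :
    (F.filter (fun A => n ∉ A)).Nonempty := by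
  obtain ⟨A, hA⟩ := hne
  by_cases hn : n ∈ A
  · obtain ⟨hsub, hcard⟩ := mem_powersetCard.1 (hF hA)
    obtain ⟨j, hj1, hj2, hj3⟩ := exists_fresh hsub (by omega)
    have hjn : j < n := by
      rcases Nat.lt_or_ge j n with h' | h'
      · exact h'
      · exact absurd (by omega : j = n) (fun hc => hj3 (hc ▸ hn))
    have hres := h j n hj1 hjn le_rfl A hA hn hj3
    refine ⟨insert j (A.erase n), mem_filter.2 ⟨hres, fun hc => ?_⟩⟩
    rcases mem_insert.1 hc with h1 | h1
    · omega
    · exact (mem_erase.1 h1).1 rfl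
  · exact ⟨A, mem_filter.2 ⟨hA, hn⟩⟩

end Stmt2Aux
end PART3
section PART4
open Finset
namespace Stmt2Aux

lemma erase_subset_Icc {n : ℕ} {A : Finset ℕ} (hA : A ⊆ Icc 1 n) :
    A.erase n ⊆ Icc 1 (n-1) := by
  intro x hx
  rw [mem_erase] at hx
  have := mem_Icc.1 (hA hx.2)
  rw [mem_Icc]
  have := hx.1
  omega

/-- S1 : cross-intersection persists on the erased parts (shiftedness of F). -/
lemma cross_erased {n b s : ℕ} {F G : Finset (Finset ℕ)}
    (hn : 2*b + s + 1 ≤ n) (hb : 1 ≤ b)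
    (hF : F ⊆ (Icc 1 n).powersetCard (b+s)) (hG : G ⊆ (Icc 1 n).powersetCard b)
    (hcross : ∀ A ∈ F, ∀ B ∈ G, 1 ≤ (A ∩ B).card) (hsF : Shifted n F) :
    ∀ A' ∈ (F.filter (fun A => n ∈ A)).image (fun A => A.erase n),
    ∀ B' ∈ (G.filter (fun B => n ∈ B)).image (fun B => B.erase n),
      1 ≤ (A' ∩ B').card := by
  intro A' hA' B' hB'
  obtain ⟨A, hAm, rfl⟩ := mem_image.1 hA'
  obtain ⟨B, hBm, rfl⟩ := mem_image.1 hB'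
  rw [mem_filter] at hAm hBm
  obtain ⟨hA, hnA⟩ := hAm
  obtain ⟨hB, hnB⟩ := hBm
  obtain ⟨hAsub, hAcard⟩ := mem_powersetCard.1 (hF hA)
  obtain ⟨hBsub, hBcard⟩ := mem_powersetCard.1 (hG hB)
  by_contra hcon
  have hempty : A.erase n ∩ B.erase n = ∅ := by
    rw [← card_eq_zero]; omega
  have hcA : (A.erase n).card = b + s - 1 := by rw [card_erase_of_mem hnA, hAcard]
  have hcB : (B.erase n).card = b - 1 := by rw [card_erase_of_mem hnB, hBcard]
  have hdisj : Disjoint (A.erase n) (B.erase n) := by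
    rw [disjoint_iff_inter_eq_empty]; exact hempty
  have hcU : (A.erase n ∪ B.erase n).card = (b+s-1) + (b-1) := by
    rw [card_union_of_disjoint hdisj, hcA, hcB]
  have hUsub : A.erase n ∪ B.erase n ⊆ Icc 1 (n-1) :=
    union_subset (erase_subset_Icc hAsub) (erase_subset_Icc hBsub)
  obtain ⟨j, hj1, hj2, hj3⟩ := exists_fresh hUsub (by omega)
  have hjA : j ∉ A := fun hc => hj3 (mem_union_left _ (mem_erase.2 ⟨by omega, hc⟩))
  have hjB : j ∉ B := fun hc => hj3 (mem_union_right _ (mem_erase.2 ⟨by omega, hc⟩))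
  have hres := hsF j n hj1 (by omega) le_rfl A hA hnA hjA
  have hc1 := hcross _ hres B hB
  obtain ⟨x, hx⟩ := card_pos.1 hc1
  rw [mem_inter] at hx
  rcases mem_insert.1 hx.1 with rfl | hxA
  · exact hjB hx.2
  · have hxn : x ≠ n := (mem_erase.1 hxA).1
    have : x ∈ A.erase n ∩ B.erase n :=
      mem_inter.2 ⟨hxA, mem_erase.2 ⟨hxn, hx.2⟩⟩
    rw [hempty] at this
    exact absurd this (notMem_empty x)

/-- S2 : the (s+1)-intersecting property persists on the erased parts. -/
lemma inter_erased {n b s : ℕ} {F : Finset (Finset ℕ)}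
    (hn : 2*b + s + 1 ≤ n) (hb : 1 ≤ b)
    (hF : F ⊆ (Icc 1 n).powersetCard (b+s))
    (hint : ∀ A ∈ F, ∀ B ∈ F, s + 1 ≤ (A ∩ B).card) (hsF : Shifted n F) :
    ∀ A' ∈ (F.filter (fun A => n ∈ A)).image (fun A => A.erase n),
    ∀ B' ∈ (F.filter (fun B => n ∈ B)).image (fun B => B.erase n),
      s + 1 ≤ (A' ∩ B').card := by
  intro A' hA' B' hB'
  obtain ⟨A, hAm, rfl⟩ := mem_image.1 hA'
  obtain ⟨B, hBm, rfl⟩ := mem_image.1 hB'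
  rw [mem_filter] at hAm hBm
  obtain ⟨hA, hnA⟩ := hAm
  obtain ⟨hB, hnB⟩ := hBm
  obtain ⟨hAsub, hAcard⟩ := mem_powersetCard.1 (hF hA)
  obtain ⟨hBsub, hBcard⟩ := mem_powersetCard.1 (hF hB)
  -- the intersection of the erased sets is the erased intersection
  have hIe : A.erase n ∩ B.erase n = (A ∩ B).erase n := by
    ext x; simp only [mem_inter, mem_erase]; tauto
  have hIcard : (A.erase n ∩ B.erase n).card + 1 = (A ∩ B).card := by
    rw [hIe, card_erase_of_mem (mem_inter.2 ⟨hnA, hnB⟩)]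
    have : 1 ≤ (A ∩ B).card := card_pos.2 ⟨n, mem_inter.2 ⟨hnA, hnB⟩⟩
    omega
  by_contra hcon
  have hIs : (A.erase n ∩ B.erase n).card = s := by
    have := hint A hA B hB
    omega
  have hcA : (A.erase n).card = b + s - 1 := by rw [card_erase_of_mem hnA, hAcard]
  have hcB : (B.erase n).card = b + s - 1 := by rw [card_erase_of_mem hnB, hBcard]
  have hcU : (A.erase n ∪ B.erase n).card + (A.erase n ∩ B.erase n).card
      = (b+s-1) + (b+s-1) := by
    rw [card_union_add_card_inter, hcA, hcB]
  have hUsub : A.erase n ∪ B.erase n ⊆ Icc 1 (n-1) :=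
    union_subset (erase_subset_Icc hAsub) (erase_subset_Icc hBsub)
  obtain ⟨j, hj1, hj2, hj3⟩ := exists_fresh hUsub (by omega)
  have hjA : j ∉ A := fun hc => hj3 (mem_union_left _ (mem_erase.2 ⟨by omega, hc⟩))
  have hjB : j ∉ B := fun hc => hj3 (mem_union_right _ (mem_erase.2 ⟨by omega, hc⟩))
  have hres := hsF j n hj1 (by omega) le_rfl A hA hnA hjA
  have hc1 := hint _ hres B hB
  -- compute (insert j (A.erase n)) ∩ B = A.erase n ∩ B.erase n
  have hcomp : insert j (A.erase n) ∩ B = A.erase n ∩ B.erase n := by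
    ext x
    simp only [mem_inter, mem_insert, mem_erase]
    constructor
    · rintro ⟨(rfl | ⟨hxn, hxA⟩), hxB⟩
      · exact absurd hxB hjB
      · exact ⟨⟨hxn, hxA⟩, hxn, hxB⟩
    · rintro ⟨⟨hxn, hxA⟩, _, hxB⟩
      exact ⟨Or.inr ⟨hxn, hxA⟩, hxB⟩
  rw [hcomp, hIs] at hc1
  omega

end Stmt2Aux
end PART4
section PART5
open Finset
namespace Stmt2Aux

theorem aux (n : ℕ) : ∀ (b s : ℕ) (F G : Finset (Finset ℕ)), 1 ≤ b → 2*b + s ≤ n →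
    F ⊆ (Icc 1 n).powersetCard (b+s) → G ⊆ (Icc 1 n).powersetCard b →
    F.Nonempty → (∀ A ∈ F, ∀ B ∈ F, s+1 ≤ (A ∩ B).card) →
    (∀ A ∈ F, ∀ B ∈ G, 1 ≤ (A ∩ B).card) →
    Shifted n F → Shifted n G →
    F.card + G.card + (n - (b+s)).choose b ≤ n.choose b + 1 := by
  induction n using Nat.strong_induction_on with
  | _ n ih =>
  intro b s F G hb hn hF hG hFne hint hcross hsF hsG
  by_cases hb1 : b = 1
  · -- base case b = 1 : F is a single set, G ⊆ singletons of that set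
    subst hb1
    obtain ⟨A0, hA0⟩ := hFne
    obtain ⟨hA0sub, hA0card⟩ := mem_powersetCard.1 (hF hA0)
    have hFsing : F = {A0} := by
      apply Subset.antisymm _ (singleton_subset_iff.2 hA0)
      intro A hA
      obtain ⟨hAsub, hAcard⟩ := mem_powersetCard.1 (hF hA)
      have h1 := hint A hA A0 hA0
      have h2 : A ∩ A0 = A0 := eq_of_subset_of_card_le inter_subset_right (by omega)
      have h3 : A0 ⊆ A := by rw [← h2]; exact inter_subset_left
      have h4 : A = A0 := (eq_of_subset_of_card_le h3 (by omega)).symm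
      exact mem_singleton.2 h4
    have hFcard : F.card = 1 := by rw [hFsing]; exact card_singleton A0
    have hGsub : G ⊆ A0.powersetCard 1 := by
      intro B hB
      obtain ⟨hBsub, hBcard⟩ := mem_powersetCard.1 (hG hB)
      have h1 := hcross A0 hA0 B hB
      have h2 : A0 ∩ B = B := eq_of_subset_of_card_le inter_subset_right (by omega)
      have h3 : B ⊆ A0 := by rw [← h2]; exact inter_subset_left
      exact mem_powersetCard.2 ⟨h3, hBcard⟩
    have hGcard : G.card ≤ 1 + s := by
      have := card_le_card hGsub
      rw [card_powersetCard, hA0card] at this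
      rw [Nat.choose_one_right] at this
      omega
    rw [Nat.choose_one_right, Nat.choose_one_right]
    omega
  by_cases hbase : n = 2*b + s
  · -- base case n = 2b+s : complement argument
    have hX : (Icc 1 n).card = n := by rw [Nat.card_Icc]; omega
    have himgsub : F.image (fun A => Icc 1 n \ A) ⊆ (Icc 1 n).powersetCard b := by
      intro B hB
      obtain ⟨A, hA, rfl⟩ := mem_image.1 hB
      obtain ⟨hAsub, hAcard⟩ := mem_powersetCard.1 (hF hA)
      refine mem_powersetCard.2 ⟨sdiff_subset, ?_⟩
      rw [card_sdiff_of_subset hAsub, hX, hAcard]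
      omega
    have hinj : Set.InjOn (fun A => Icc 1 n \ A) ↑F := by
      intro A hA B hB hAB
      simp only [mem_coe] at hA hB
      obtain ⟨hAsub, _⟩ := mem_powersetCard.1 (hF hA)
      obtain ⟨hBsub, _⟩ := mem_powersetCard.1 (hF hB)
      simp only at hAB
      have h1 : Icc 1 n \ (Icc 1 n \ A) = Icc 1 n \ (Icc 1 n \ B) := by rw [hAB]
      rwa [sdiff_sdiff_self_left, sdiff_sdiff_self_left,
        inter_eq_right.2 hAsub, inter_eq_right.2 hBsub] at h1
    have hdisj : Disjoint (F.image (fun A => Icc 1 n \ A)) G := by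
      rw [disjoint_left]
      intro B hB hBG
      obtain ⟨A, hA, rfl⟩ := mem_image.1 hB
      have h1 := hcross A hA _ hBG
      rw [inter_sdiff_self] at h1
      simp at h1
    have hcup : F.card + G.card ≤ n.choose b := by
      have h1 : (F.image (fun A => Icc 1 n \ A)) ∪ G ⊆ (Icc 1 n).powersetCard b :=
        union_subset himgsub hG
      have h2 := card_le_card h1
      rw [card_union_of_disjoint hdisj, card_image_of_injOn hinj,
        card_powersetCard, hX] at h2
      exact h2
    have : n - (b+s) = b := by omega
    rw [this, Nat.choose_self]
    omega
  -- main induction step : n > 2b+s, b ≥ 2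
  have hb2 : 2 ≤ b := by omega
  obtain ⟨b', rfl⟩ : ∃ b', b = b' + 2 := ⟨b - 2, by omega⟩
  obtain ⟨m, rfl⟩ : ∃ m, n = m + 1 := ⟨n - 1, by omega⟩
  have hmn : m + 1 - 1 = m := by omega
  -- the four pieces
  set Ff := F.filter (fun A => (m+1) ∉ A) with hFf
  set Fn := (F.filter (fun A => (m+1) ∈ A)).image (fun A => A.erase (m+1)) with hFn
  set Gf := G.filter (fun A => (m+1) ∉ A) with hGf
  set Gn := (G.filter (fun A => (m+1) ∈ A)).image (fun A => A.erase (m+1)) with hGn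
  have hFsplit : F.card = Ff.card + Fn.card := card_split (m+1) F
  have hGsplit : G.card = Gf.card + Gn.card := card_split (m+1) G
  have hFfsub : Ff ⊆ (Icc 1 m).powersetCard (b'+2+s) := by
    have := filter_ground (n := m+1) hF
    rwa [hmn] at this
  have hGfsub : Gf ⊆ (Icc 1 m).powersetCard (b'+2) := by
    have := filter_ground (n := m+1) hG
    rwa [hmn] at this
  have hFnsub : Fn ⊆ (Icc 1 m).powersetCard (b'+1+s) := by
    have := erased_ground (n := m+1) hF (a' := b'+1+s) (by omega)
    rwa [hmn] at this
  have hGnsub : Gn ⊆ (Icc 1 m).powersetCard (b'+1) := by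
    have := erased_ground (n := m+1) hG (a' := b'+1) (by omega)
    rwa [hmn] at this
  have hsFf : Shifted m Ff := by have := shifted_filter hsF; rwa [hmn] at this
  have hsGf : Shifted m Gf := by have := shifted_filter hsG; rwa [hmn] at this
  have hsFn : Shifted m Fn := by have := shifted_erase hsF; rwa [hmn] at this
  have hsGn : Shifted m Gn := by have := shifted_erase hsG; rwa [hmn] at this
  have hFfne : Ff.Nonempty := filter_nonempty hsF hF hFne (by omega)
  have hintf : ∀ A ∈ Ff, ∀ B ∈ Ff, s+1 ≤ (A ∩ B).card :=
    fun A hA B hB => hint A (mem_filter.1 hA).1 B (mem_filter.1 hB).1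
  have hcrossf : ∀ A ∈ Ff, ∀ B ∈ Gf, 1 ≤ (A ∩ B).card :=
    fun A hA B hB => hcross A (mem_filter.1 hA).1 B (mem_filter.1 hB).1
  have hIH1 := ih m (by omega) (b'+2) s Ff Gf (by omega) (by omega) hFfsub hGfsub
    hFfne hintf hcrossf hsFf hsGf
  by_cases hFne2 : (F.filter (fun A => (m+1) ∈ A)).Nonempty
  · -- Fn nonempty : use the induction hypothesis twice
    have hFnne : Fn.Nonempty := by
      rw [hFn]
      exact hFne2.image _
    have hintn : ∀ A ∈ Fn, ∀ B ∈ Fn, s+1 ≤ (A ∩ B).card := by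
      have := inter_erased (n := m+1) (b := b'+2) (s := s) (by omega) (by omega) hF hint hsF
      intro A hA B hB
      exact this A hA B hB
    have hcrossn : ∀ A ∈ Fn, ∀ B ∈ Gn, 1 ≤ (A ∩ B).card := by
      have := cross_erased (n := m+1) (b := b'+2) (s := s) (by omega) (by omega) hF hG hcross hsF
      intro A hA B hB
      exact this A hA B hB
    have hIH2 := ih m (by omega) (b'+1) s Fn Gn (by omega) (by omega)
      (by rwa [show b'+1+s = b'+1+s from rfl] at hFnsub) hGnsub hFnne hintn hcrossn hsFn hsGn
    -- arithmetic
    set u := m - (b'+2+s) with hu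
    have eu1 : m - (b'+1+s) = u + 1 := by omega
    have eu2 : m + 1 - (b'+2+s) = u + 1 := by omega
    rw [eu1] at hIH2
    rw [eu2]
    have c1 : (m+1).choose (b'+2) = m.choose (b'+1) + m.choose (b'+2) :=
      Nat.choose_succ_succ m (b'+1)
    have c2 : (u+1).choose (b'+2) = u.choose (b'+1) + u.choose (b'+2) :=
      Nat.choose_succ_succ u (b'+1)
    have c3 : (u+1).choose (b'+1) = u.choose b' + u.choose (b'+1) :=
      Nat.choose_succ_succ u b'
    have c4 : 1 ≤ u.choose b' := Nat.choose_pos (by omega)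
    omega
  · -- Fn empty : bound Gn directly by counting
    have hFncard : Fn.card = 0 := by
      rw [hFn, not_nonempty_iff_eq_empty.1 hFne2]
      simp
    obtain ⟨A0, hA0⟩ := hFfne
    have hA0F : A0 ∈ F := (mem_filter.1 hA0).1
    have hA0n : (m+1) ∉ A0 := (mem_filter.1 hA0).2
    obtain ⟨hA0sub, hA0card⟩ := mem_powersetCard.1 (hFfsub hA0)
    have hmeets : ∀ B ∈ Gn, 1 ≤ (B ∩ A0).card := by
      intro B' hB'
      obtain ⟨B, hBm, rfl⟩ := mem_image.1 hB'
      rw [mem_filter] at hBm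
      have h1 := hcross A0 hA0F B hBm.1
      obtain ⟨x, hx⟩ := card_pos.1 h1
      rw [mem_inter] at hx
      have hxn : x ≠ m+1 := fun hc => hA0n (hc ▸ hx.1)
      exact card_pos.2 ⟨x, mem_inter.2 ⟨mem_erase.2 ⟨hxn, hx.2⟩, hx.1⟩⟩
    have hcount := count_disjoint hA0sub Gn hGnsub hmeets
    rw [Nat.card_Icc, hA0card, hmn] at hcount
    -- arithmetic
    set u := m - (b'+2+s) with hu
    have eu2 : m + 1 - (b'+2+s) = u + 1 := by omega
    rw [eu2]
    have c1 : (m+1).choose (b'+2) = m.choose (b'+1) + m.choose (b'+2) :=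
      Nat.choose_succ_succ m (b'+1)
    have c2 : (u+1).choose (b'+2) = u.choose (b'+1) + u.choose (b'+2) :=
      Nat.choose_succ_succ u (b'+1)
    omega

end Stmt2Aux
end PART5
section FINAL
open Finset Stmt2Aux

theorem stmt_2 (n k t : ℕ) (hk : 2 ≤ k) (hn : 2 * k + t ≤ n)
    (F G : Finset (Finset ℕ))
    (hF : F ⊆ (Finset.Icc 1 n).powersetCard (k + t))
    (hG : G ⊆ (Finset.Icc 1 n).powersetCard k)
    (hFne : F.Nonempty)
    (hFint : ∀ A ∈ F, ∀ B ∈ F, t + 1 ≤ (A ∩ B).card)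
    (hcross : ∀ A ∈ F, ∀ B ∈ G, (A ∩ B).Nonempty) :
    F.card + G.card ≤ n.choose k - (n - k - t).choose k + 1 := by
  have hcross' : ∀ A ∈ F, ∀ B ∈ G, 1 ≤ (A ∩ B).card :=
    fun A hA B hB => card_pos.2 (hcross A hA B hB)
  obtain ⟨F', G', hc1, hc2, hs1, hs2, hs3, hs4, hs5, hs6⟩ :=
    shift_exists n (k+t) k (t+1) (meas F + meas G) F G le_rfl hF hG hFint hcross'
  have hF'ne : F'.Nonempty := by
    rw [← card_pos, hc1, card_pos]
    exact hFne
  have haux := aux n k t F' G' (by omega) hn hs1 hs2 hF'ne hs3 hs4 hs5 hs6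
  have hle : (n - (k+t)).choose k ≤ n.choose k := Nat.choose_le_choose k (by omega)
  have hsub : n - k - t = n - (k+t) := by omega
  rw [hsub]
  omega

end FINAL
end

section
/- Let F ⊆ 2^[n] be a shifted (t+1)-intersecting family (t ≥ 0). Then the family F(1̄) = {F ∈ F : 1 ∉ F} is (t+2)-intersecting. -/
theorem stmt_5 (n t : ℕ)
    (F : Finset (Finset ℕ))
    (hF : ∀ A ∈ F, A ⊆ Finset.Icc 1 n)
    (hshift : ∀ A ∈ F, ∀ i ∈ Finset.Icc 1 n, ∀ j, i < j → i ∉ A → j ∈ A →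
      insert i (A.erase j) ∈ F)
    (hFint : ∀ A ∈ F, ∀ B ∈ F, t + 1 ≤ (A ∩ B).card) :
    ∀ A ∈ F, 1 ∉ A → ∀ B ∈ F, 1 ∉ B → t + 2 ≤ (A ∩ B).card := by
  intro A hA h1A B hB h1B
  by_contra hcon
  push_neg at hcon
  have hge := hFint A hA B hB
  have hcard : (A ∩ B).card = t + 1 := le_antisymm (by omega) hge
  have hne : (A ∩ B).Nonempty := Finset.card_pos.mp (by omega)
  obtain ⟨j, hj⟩ := hne
  have hjA : j ∈ A := (Finset.mem_inter.mp hj).1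
  have hjB : j ∈ B := (Finset.mem_inter.mp hj).2
  have hjIcc := hF A hA hjA
  have hj1 : 1 < j := by
    have := (Finset.mem_Icc.mp hjIcc).1
    rcases Nat.lt_or_ge 1 j with h | h
    · exact h
    · interval_cases j
      exact absurd hjA h1A
  have h1Icc : (1 : ℕ) ∈ Finset.Icc 1 n := by
    have := (Finset.mem_Icc.mp hjIcc).2
    exact Finset.mem_Icc.mpr ⟨le_refl 1, by omega⟩
  have hA' := hshift A hA 1 h1Icc j hj1 h1A hjA
  have hint := hFint _ hA' B hB
  have heq : insert 1 (A.erase j) ∩ B = (A ∩ B).erase j := by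
    ext x
    simp only [Finset.mem_inter, Finset.mem_insert, Finset.mem_erase]
    constructor
    · rintro ⟨h1 | ⟨hx, hxA⟩, hxB⟩
      · exact absurd (h1 ▸ hxB) h1B
      · exact ⟨hx, hxA, hxB⟩
    · rintro ⟨hx, hxA, hxB⟩
      exact ⟨Or.inr ⟨hx, hxA⟩, hxB⟩
  rw [heq, Finset.card_erase_of_mem hj, hcard] at hint
  omega
end

section
/- Let k ≥ 1, t ≥ 0 and n ≥ 2k + t. If F ⊆ binom([n], k+t) is a shifted (t+1)-intersecting family, then the family F(n) = {F \ {n} : n ∈ F ∈ F} is (t+1)-intersecting. -/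
theorem stmt_6 (n k t : ℕ) (hk : 1 ≤ k) (hn : 2 * k + t ≤ n)
    (F : Finset (Finset ℕ))
    (hF : F ⊆ (Finset.Icc 1 n).powersetCard (k + t))
    (hshift : ∀ A ∈ F, ∀ i ∈ Finset.Icc 1 n, ∀ j, i < j → i ∉ A → j ∈ A →
      insert i (A.erase j) ∈ F)
    (hFint : ∀ A ∈ F, ∀ B ∈ F, t + 1 ≤ (A ∩ B).card) :
    ∀ A ∈ F, n ∈ A → ∀ B ∈ F, n ∈ B →
      t + 1 ≤ ((A.erase n) ∩ (B.erase n)).card := by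
  intro A hA hnA B hB hnB
  have hAc := hF hA
  have hBc := hF hB
  rw [Finset.mem_powersetCard] at hAc hBc
  obtain ⟨hAsub, hAcard⟩ := hAc
  obtain ⟨hBsub, hBcard⟩ := hBc
  have hint := hFint A hA B hB
  have hcu := Finset.card_union_add_card_inter A B
  have hcard : (A ∪ B).card < n := by omega
  have hex : ∃ i ∈ Finset.Icc 1 n, i ∉ A ∪ B := by
    by_contra h; push_neg at h
    have hsub : Finset.Icc 1 n ⊆ A ∪ B := h
    have := Finset.card_le_card hsub
    rw [Nat.card_Icc] at this
    omega
  obtain ⟨i, hi, hiAB⟩ := hex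
  rw [Finset.mem_union] at hiAB
  push_neg at hiAB
  have hin : i < n :=
    lt_of_le_of_ne ((Finset.mem_Icc.1 hi).2) (by rintro rfl; exact hiAB.2 hnB)
  have hB' := hshift B hB i hi n hin hiAB.2 hnB
  have hkey := hFint A hA _ hB'
  have heq : A ∩ insert i (B.erase n) = A.erase n ∩ B.erase n := by
    ext x
    simp only [Finset.mem_inter, Finset.mem_insert, Finset.mem_erase]
    constructor
    · rintro ⟨hxA, hx | ⟨hxn, hxB⟩⟩
      · exact absurd hxA (hx ▸ hiAB.1)
      · exact ⟨⟨hxn, hxA⟩, hxn, hxB⟩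
    · rintro ⟨⟨hxn, hxA⟩, _, hxB⟩; exact ⟨hxA, Or.inr ⟨hxn, hxB⟩⟩
  rwa [heq] at hkey
end

section
/- Let k ≥ 1, t ≥ 0, n ≥ 2k + t, and 1 ≤ r ≤ n - k - t. If F ⊆ binom([n], k+t) is a shifted family with |F| ≥ r, then |F(n̄)| ≥ r, where F(n̄) = {F ∈ F : n ∉ F}. -/
theorem stmt_7 (n k t r : ℕ) (hk : 1 ≤ k) (hn : 2 * k + t ≤ n)
    (hr1 : 1 ≤ r) (hrn : r ≤ n - k - t)
    (F : Finset (Finset ℕ))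
    (hF : F ⊆ (Finset.Icc 1 n).powersetCard (k + t))
    (hshift : ∀ A ∈ F, ∀ i ∈ Finset.Icc 1 n, ∀ j, i < j → i ∉ A → j ∈ A →
      insert i (A.erase j) ∈ F)
    (hFr : r ≤ F.card) :
    r ≤ (F.filter (fun A => n ∉ A)).card := by
  by_cases h : ∃ A ∈ F, n ∈ A
  · obtain ⟨A, hA, hnA⟩ := h
    have hApow := hF hA
    rw [Finset.mem_powersetCard] at hApow
    obtain ⟨hAsub, hAcard⟩ := hApow
    have hn2 : 2 ≤ n := by omega
    set S := (Finset.Icc 1 (n - 1)) \ A.erase n with hSdef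
    have hnotA : ∀ i ∈ S, i ∉ A := by
      intro i hi hiA
      rw [hSdef, Finset.mem_sdiff, Finset.mem_Icc] at hi
      exact hi.2 (Finset.mem_erase.mpr ⟨by omega, hiA⟩)
    have hmaps : ∀ i ∈ S, insert i (A.erase n) ∈ F.filter (fun A => n ∉ A) := by
      intro i hi
      have hiA := hnotA i hi
      rw [hSdef, Finset.mem_sdiff, Finset.mem_Icc] at hi
      have hmem : insert i (A.erase n) ∈ F :=
        hshift A hA i (Finset.mem_Icc.mpr ⟨hi.1.1, by omega⟩) n (by omega) hiA hnA
      refine Finset.mem_filter.mpr ⟨hmem, ?_⟩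
      intro hcontra
      rcases Finset.mem_insert.mp hcontra with h1 | h1
      · omega
      · exact (Finset.notMem_erase n A) h1
    have hinj : Set.InjOn (fun i => insert i (A.erase n)) S := by
      intro i hi j hj hij
      have hi' : i ∉ A.erase n := fun hh => hnotA i hi (Finset.mem_of_mem_erase hh)
      have hj' : j ∉ A.erase n := fun hh => hnotA j hj (Finset.mem_of_mem_erase hh)
      simp only at hij
      have : i ∈ insert j (A.erase n) := by
        rw [← hij]; exact Finset.mem_insert_self i _
      rcases Finset.mem_insert.mp this with h1 | h1
      · exact h1
      · exact absurd h1 hi'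
    have hcard : S.card ≤ (F.filter (fun A => n ∉ A)).card :=
      Finset.card_le_card_of_injOn _ hmaps hinj
    have hsub : A.erase n ⊆ Finset.Icc 1 (n - 1) := by
      intro x hx
      have hx1 := Finset.mem_erase.mp hx
      have hx2 := Finset.mem_Icc.mp (hAsub hx1.2)
      exact Finset.mem_Icc.mpr ⟨hx2.1, by omega⟩
    have hScard : S.card = n - k - t := by
      rw [hSdef, Finset.card_sdiff_of_subset hsub, Finset.card_erase_of_mem hnA,
        Nat.card_Icc, hAcard]
      omega
    omega
  · push_neg at h
    rw [Finset.filter_true_of_mem h]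
    exact hFr
end

section
/- If F ⊆ binom([n], k+t) is shifted and contains some set F with n ∈ F, then |F(n̄)| ≥ n - k - t, where F(n̄) = {F ∈ F : n ∉ F}. -/
theorem stmt_8 (n k t : ℕ)
    (F : Finset (Finset ℕ))
    (hF : F ⊆ (Finset.Icc 1 n).powersetCard (k + t))
    (hshift : ∀ A ∈ F, ∀ i ∈ Finset.Icc 1 n, ∀ j, i < j → i ∉ A → j ∈ A →
      insert i (A.erase j) ∈ F)
    (hmem : ∃ A ∈ F, n ∈ A) :
    n - k - t ≤ (F.filter (fun A => n ∉ A)).card := by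
  obtain ⟨A, hA, hnA⟩ := hmem
  obtain ⟨hsub, hcard⟩ := Finset.mem_powersetCard.mp (hF hA)
  have key : ((Finset.Icc 1 n) \ A).image (fun j => insert j (A.erase n)) ⊆
      F.filter (fun A => n ∉ A) := by
    intro B hB
    simp only [Finset.mem_image, Finset.mem_sdiff] at hB
    obtain ⟨j, ⟨hj1, hj2⟩, rfl⟩ := hB
    have hjn : j < n := lt_of_le_of_ne (Finset.mem_Icc.mp hj1).2 (fun h => hj2 (h ▸ hnA))
    rw [Finset.mem_filter]
    refine ⟨hshift A hA j hj1 n hjn hj2 hnA, ?_⟩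
    simp only [Finset.mem_insert, Finset.mem_erase, not_or]
    exact ⟨hjn.ne', fun h => h.1 rfl⟩
  have hinj : Set.InjOn (fun j => insert j (A.erase n)) ((Finset.Icc 1 n) \ A : Finset ℕ) := by
    intro a ha b hb hab
    by_contra hne
    simp only [Finset.coe_sdiff, Set.mem_diff, Finset.mem_coe] at ha hb
    have hab' : insert a (A.erase n) = insert b (A.erase n) := hab
    have : a ∈ insert b (A.erase n) := hab' ▸ Finset.mem_insert_self a (A.erase n)
    rcases Finset.mem_insert.mp this with h | h
    · exact hne h
    · exact ha.2 (Finset.mem_of_mem_erase h)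
  calc n - k - t = ((Finset.Icc 1 n) \ A).card := by
        rw [Finset.card_sdiff_of_subset hsub, Nat.card_Icc, hcard]; omega
    _ = (((Finset.Icc 1 n) \ A).image (fun j => insert j (A.erase n))).card :=
        (Finset.card_image_of_injOn hinj).symm
    _ ≤ _ := Finset.card_le_card key
end

section
/- Let t ≥ 0, k ≥ 1, n ≥ 2k + t. Let F ⊆ binom([n], k+t) and G ⊆ binom([n], k) be shifted cross-intersecting families. Then F(n) and G(n) are cross-intersecting, where F(n) = {F \ {n} : n ∈ F ∈ F} and G(n) = {G \ {n} : n ∈ G ∈ G}. -/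
theorem stmt_10 (n k t : ℕ) (hk : 1 ≤ k) (hn : 2 * k + t ≤ n)
    (F G : Finset (Finset ℕ))
    (hF : F ⊆ (Finset.Icc 1 n).powersetCard (k + t))
    (hG : G ⊆ (Finset.Icc 1 n).powersetCard k)
    (hFshift : ∀ A ∈ F, ∀ i ∈ Finset.Icc 1 n, ∀ j, i < j → i ∉ A → j ∈ A →
      insert i (A.erase j) ∈ F)
    (hGshift : ∀ B ∈ G, ∀ i ∈ Finset.Icc 1 n, ∀ j, i < j → i ∉ B → j ∈ B →
      insert i (B.erase j) ∈ G)
    (hcross : ∀ A ∈ F, ∀ B ∈ G, (A ∩ B).Nonempty) :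
    ∀ A ∈ (F.filter (fun A => n ∈ A)).image (fun A => A.erase n),
      ∀ B ∈ (G.filter (fun B => n ∈ B)).image (fun B => B.erase n),
        (A ∩ B).Nonempty := by
  intro A' hA' B' hB'
  simp only [Finset.mem_image, Finset.mem_filter] at hA' hB'
  obtain ⟨A, ⟨hAF, hnA⟩, rfl⟩ := hA'
  obtain ⟨B, ⟨hBG, hnB⟩, rfl⟩ := hB'
  by_contra hempty
  rw [Finset.not_nonempty_iff_eq_empty] at hempty
  -- properties of A and B
  have hAspec := Finset.mem_powersetCard.mp (hF hAF)
  have hBspec := Finset.mem_powersetCard.mp (hG hBG)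
  -- card of union
  have hUcard : (A ∪ B).card < n := by
    have h1 : (A ∪ B).card + (A ∩ B).card = A.card + B.card :=
      Finset.card_union_add_card_inter A B
    have h2 : 1 ≤ (A ∩ B).card :=
      Finset.card_pos.mpr ⟨n, Finset.mem_inter.mpr ⟨hnA, hnB⟩⟩
    rw [hAspec.2, hBspec.2] at h1
    omega
  have hUsub : A ∪ B ⊆ Finset.Icc 1 n := Finset.union_subset hAspec.1 hBspec.1
  have hcardIcc : (Finset.Icc 1 n).card = n := by
    rw [Nat.card_Icc]; omega
  obtain ⟨i, hiIcc, hiU⟩ := Finset.exists_of_ssubset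
    (Finset.ssubset_iff_subset_ne.mpr ⟨hUsub, by
      intro h; rw [h, hcardIcc] at hUcard; omega⟩)
  have hiA : i ∉ A := fun h => hiU (Finset.mem_union_left _ h)
  have hiB : i ∉ B := fun h => hiU (Finset.mem_union_right _ h)
  have hin : i < n := by
    rcases Finset.mem_Icc.mp hiIcc with ⟨_, hle⟩
    rcases lt_or_eq_of_le hle with h | h
    · exact h
    · exact absurd (h ▸ hnB) hiB
  have hB' : insert i (B.erase n) ∈ G := hGshift B hBG i hiIcc n hin hiB hnB
  obtain ⟨x, hx⟩ := hcross A hAF _ hB'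
  rw [Finset.mem_inter, Finset.mem_insert] at hx
  obtain ⟨hxA, hxi | hxB⟩ := hx
  · exact hiA (hxi ▸ hxA)
  · have hxn : x ≠ n := (Finset.mem_erase.mp hxB).1
    have : x ∈ A.erase n ∩ B.erase n :=
      Finset.mem_inter.mpr ⟨Finset.mem_erase.mpr ⟨hxn, hxA⟩, hxB⟩
    rw [hempty] at this
    exact absurd this (Finset.notMem_empty x)
end

section
/- Let 2 ≤ s ≤ n - 2 and let F ⊆ 2^[n] be an s-union family. Then for every 1 ≤ i ≤ s/2, |F_i| + |F_{s+1-i}| ≤ C(n, i), where F_m = {F ∈ F : |F| = m}. Moreover, equality holds if and only if F_i = binom([n], i) and F_{s+1-i} = ∅. -/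
/-!
Complementing in `X = [n]` turns `F_{s+1-i}` into an `(n - s)`-intersecting family `𝒜` of
`(n - s - 1 + i)`-sets. An `i`-set lying in a member `X \ B` of `𝒜` is disjoint from `B`, so its
union with `B` has `s + 1` elements and it is not in `F_i`. Hence `|F_i| + |∂^k 𝒜| ≤ C(n, i)` for
`k = n - s - 1 ≥ 1`, and it remains to see that `|∂^k 𝒜| > |𝒜|` whenever `𝒜 ≠ ∅`.

The latter follows from Katona's intersecting shadow theorem, `(i + k) |𝒜| ≤ i |∂^k 𝒜|` for
`(k + 1)`-intersecting families of `(i + k)`-sets, proved by induction on the weight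
`∑_{A ∈ 𝒜} ∑_{a ∈ A} (a + 1)`. Shifting `v` to a smaller `u` keeps the hypotheses, lowers the
weight and does not enlarge shadows. If the ground set is small, iterated local LYM gives the
bound. Otherwise, once `𝒜` is stable under all shifts into its largest element `v`, the sets
avoiding `v` and the sets through `v` with `v` removed are again `(k + 1)`-intersecting, and
their shadows (the second with `v` put back) lie disjointly inside `∂^k 𝒜`.
-/

open Finset
open scoped FinsetFamily

namespace UV

variable {α : Type*} [DecidableEq α] {u v : α}

theorem compress_singleton (huv : u ≠ v) (A : Finset α) :
    compress {u} {v} A = if u ∉ A ∧ v ∈ A then insert u (A.erase v) else A := by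
  by_cases h : u ∉ A ∧ v ∈ A
  · rw [if_pos h, compress_of_disjoint_of_le (disjoint_singleton_left.2 h.1)
      (singleton_subset_iff.2 h.2)]
    ext a
    simp only [sup_eq_union, mem_sdiff, mem_union, mem_singleton, mem_insert, mem_erase]
    constructor
    · rintro ⟨h1 | rfl, h2⟩ <;> tauto
    · rintro (rfl | ⟨hav, haA⟩) <;> tauto
  · rw [if_neg h, compress, if_neg]
    rwa [disjoint_singleton_left, singleton_subset_iff]

theorem min_card_inter_le_card_inter_compress (huv : u ≠ v) (P Q : Finset α) :
    min #(P ∩ Q) #(compress {u} {v} P ∩ Q) ≤ #(P ∩ compress {u} {v} Q) := by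
  rw [compress_singleton huv Q]
  split_ifs with hQ
  swap
  · exact min_le_left _ _
  obtain ⟨huQ, hvQ⟩ := hQ
  by_cases hvP : v ∈ P
  · by_cases huP : u ∈ P
    · rw [inter_insert_of_mem huP, inter_erase, card_insert_of_notMem (by simp [huQ]),
        card_erase_add_one (mem_inter.2 ⟨hvP, hvQ⟩)]
      exact min_le_left _ _
    · rw [compress_singleton huv P, if_pos ⟨huP, hvP⟩, insert_inter_of_notMem huQ,
        inter_insert_of_notMem huP, erase_inter, inter_erase]
      exact min_le_right _ _
  · refine (min_le_left _ _).trans (card_le_card fun a ha => ?_)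
    rw [mem_inter] at ha ⊢
    exact ⟨ha.1, mem_insert_of_mem (mem_erase.2 ⟨fun h => hvP (h ▸ ha.1), ha.2⟩)⟩

theorem card_compress_inter_compress (huv : u ≠ v) {Z W : Finset α} (huZ : u ∉ Z) (hvZ : v ∈ Z)
    (huW : u ∉ W) (hvW : v ∈ W) :
    #(compress {u} {v} Z ∩ compress {u} {v} W) = #(Z ∩ W) := by
  rw [compress_singleton huv, compress_singleton huv, if_pos ⟨huZ, hvZ⟩, if_pos ⟨huW, hvW⟩,
    ← insert_inter_distrib, erase_inter, inter_erase, erase_idem,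
    card_insert_of_notMem (by simp [huZ]),
    card_erase_add_one (mem_inter.2 ⟨hvZ, hvW⟩)]

theorem notMem_and_mem_of_compress_ne (huv : u ≠ v) {A : Finset α}
    (h : compress {u} {v} A ≠ A) : u ∉ A ∧ v ∈ A := by
  by_contra hA
  exact h (by rw [compress_singleton huv, if_neg hA])

theorem sum_compression {M : Type*} [AddCommMonoid M] (U V : Finset α) (𝒜 : Finset (Finset α))
    (f : Finset α → M) :
    ∑ A ∈ 𝓒 U V 𝒜, f A = ∑ A ∈ 𝒜 with compress U V A ∈ 𝒜, f A +
      ∑ A ∈ 𝒜 with compress U V A ∉ 𝒜, f (compress U V A) := by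
  rw [compression, sum_union compress_disjoint, filter_image, sum_image compress_injOn]

theorem shadow_iterate_compression_subset (u v : α) (k : ℕ) (𝒜 : Finset (Finset α)) :
    ∂^[k] (𝓒 {u} {v} 𝒜) ⊆ 𝓒 {u} {v} (∂^[k] 𝒜) := by
  induction k generalizing 𝒜 with
  | zero => exact Subset.rfl
  | succ k ih =>
    rw [Function.iterate_succ_apply, Function.iterate_succ_apply]
    refine (Monotone.iterate shadow_monotone k ?_).trans (ih _)
    refine shadow_compression_subset_compression_shadow _ _ fun x hx =>
      ⟨v, mem_singleton_self v, ?_⟩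
    rw [mem_singleton.1 hx, erase_singleton, erase_singleton]
    exact isCompressed_self _ _

theorem card_shadow_iterate_compression_le (u v : α) (k : ℕ) (𝒜 : Finset (Finset α)) :
    #(∂^[k] (𝓒 {u} {v} 𝒜)) ≤ #(∂^[k] 𝒜) :=
  (card_le_card (shadow_iterate_compression_subset u v k 𝒜)).trans (card_compression _ _ _).le

end UV

namespace Finset

section LocalLYM

variable {α : Type*} [DecidableEq α] {𝒜 : Finset (Finset α)} {X : Finset α} {r k : ℕ}

theorem card_mul_le_card_shadow_mul_of_forall_subset
    (h𝒜 : (𝒜 : Set (Finset α)).Sized (r + 1)) (hX : ∀ A ∈ 𝒜, A ⊆ X) :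
    #𝒜 * (r + 1) ≤ #(∂ 𝒜) * (#X - r) := by
  refine card_mul_le_card_mul' (· ⊆ ·) (fun A hA => ?_) (fun S hS => ?_)
  · rw [← h𝒜 hA, ← card_image_of_injOn A.erase_injOn]
    refine card_le_card ?_
    simp_rw [image_subset_iff, mem_bipartiteBelow]
    exact fun a ha => ⟨erase_mem_shadow hA ha, erase_subset _ _⟩
  · obtain ⟨A, hA, hSA⟩ := exists_subset_of_mem_shadow hS
    have hSr : #S = r := by simpa using (Set.Sized.shadow h𝒜) hS
    rw [← hSr, ← card_sdiff_of_subset (hSA.trans (hX A hA))]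
    rw [← card_image_of_injOn ((insert_inj_on S).mono fun a ha => (mem_sdiff.1 ha).2)]
    refine card_le_card fun B hB => ?_
    rw [mem_bipartiteAbove] at hB
    obtain ⟨a, ha, rfl⟩ := exists_eq_insert_iff.2 ⟨hB.2, by rw [h𝒜 hB.1, hSr]⟩
    exact mem_image_of_mem _ (mem_sdiff.2 ⟨hX _ hB.1 (mem_insert_self a S), ha⟩)

theorem card_mul_descFactorial_le_card_shadow_iterate_mul
    (h𝒜 : (𝒜 : Set (Finset α)).Sized (r + k)) (hX : ∀ A ∈ 𝒜, A ⊆ X) :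
    #𝒜 * (r + k).descFactorial k ≤ #(∂^[k] 𝒜) * (#X - r).descFactorial k := by
  induction k generalizing 𝒜 with
  | zero => simp
  | succ k ih =>
    have hstep := card_mul_le_card_shadow_mul_of_forall_subset (r := r + k) h𝒜 hX
    have hshadow := ih (𝒜 := ∂ 𝒜) (by simpa using h𝒜.shadow) fun S hS =>
      (exists_subset_of_mem_shadow hS).elim fun A hA => hA.2.trans (hX A hA.1)
    rw [Function.iterate_succ_apply, ← add_assoc, Nat.succ_descFactorial_succ,
      Nat.descFactorial_succ, Nat.sub_sub]
    calc #𝒜 * ((r + k + 1) * (r + k).descFactorial k)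
        = #𝒜 * (r + k + 1) * (r + k).descFactorial k := by ring
      _ ≤ #(∂ 𝒜) * (#X - (r + k)) * (r + k).descFactorial k := by gcongr
      _ = (#X - (r + k)) * (#(∂ 𝒜) * (r + k).descFactorial k) := by ring
      _ ≤ (#X - (r + k)) * (#(∂^[k] (∂ 𝒜)) * (#X - r).descFactorial k) := by gcongr
      _ = _ := by ring

theorem mul_card_le_mul_card_shadow_iterate_of_card_lt {i : ℕ}
    (h𝒜 : (𝒜 : Set (Finset α)).Sized (i + 1 + k)) (hX : ∀ A ∈ 𝒜, A ⊆ X)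
    (hXcard : #X < 2 * (i + 1) + k) :
    (i + 1 + k) * #𝒜 ≤ (i + 1) * #(∂^[k] 𝒜) := by
  have hLYM := card_mul_descFactorial_le_card_shadow_iterate_mul h𝒜 hX
  have hratio : (i + 1) * (i + 1 + k).descFactorial k = (i + 1 + k) * (i + k).descFactorial k := by
    simpa only [Nat.add_sub_cancel, Nat.add_right_comm i k 1] using Nat.succ_descFactorial (i + k) k
  refine Nat.le_of_mul_le_mul_right ?_ (Nat.descFactorial_pos.2 (Nat.le_add_left k i))
  calc (i + 1 + k) * #𝒜 * (i + k).descFactorial k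
      = (i + 1) * (#𝒜 * (i + 1 + k).descFactorial k) := by rw [mul_right_comm, ← hratio]; ring
    _ ≤ (i + 1) * (#(∂^[k] 𝒜) * (#X - (i + 1)).descFactorial k) := by gcongr
    _ ≤ (i + 1) * (#(∂^[k] 𝒜) * (i + k).descFactorial k) := by gcongr; omega
    _ = (i + 1) * #(∂^[k] 𝒜) * (i + k).descFactorial k := by ring

end LocalLYM

section Subfamilies

variable {α : Type*} [DecidableEq α] {𝒜 : Finset (Finset α)} {r : ℕ}

theorem card_shadow_iterate_nonMemberSubfamily_add_card_shadow_iterate_memberSubfamily_le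
    (a : α) (k : ℕ) (𝒜 : Finset (Finset α)) :
    #(∂^[k] (𝒜.nonMemberSubfamily a)) + #(∂^[k] (𝒜.memberSubfamily a)) ≤ #(∂^[k] 𝒜) := by
  have hfree : ∀ S ∈ ∂^[k] (𝒜.memberSubfamily a), a ∉ S := fun S hS ha => by
    obtain ⟨s, hs, hSs, -⟩ := mem_shadow_iterate_iff_exists_sdiff.1 hS
    exact (mem_memberSubfamily.1 hs).2 (hSs ha)
  have hsub : ∂^[k] (𝒜.nonMemberSubfamily a) ∪ (∂^[k] (𝒜.memberSubfamily a)).image (insert a) ⊆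
      ∂^[k] 𝒜 := by
    refine union_subset (Monotone.iterate shadow_monotone k (filter_subset _ _)) ?_
    simp_rw [image_subset_iff, mem_shadow_iterate_iff_exists_sdiff]
    rintro S ⟨s, hs, hSs, hcard⟩
    refine ⟨insert a s, (mem_memberSubfamily.1 hs).1, insert_subset_insert a hSs, ?_⟩
    rwa [insert_sdiff_insert, sdiff_insert_of_notMem (mem_memberSubfamily.1 hs).2]
  have hdisj : Disjoint (∂^[k] (𝒜.nonMemberSubfamily a))
      ((∂^[k] (𝒜.memberSubfamily a)).image (insert a)) := by
    simp_rw [disjoint_right, mem_image, mem_shadow_iterate_iff_exists_sdiff]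
    rintro _ ⟨S, -, rfl⟩ ⟨s, hs, hSs, -⟩
    exact (mem_nonMemberSubfamily.1 hs).2 (hSs (mem_insert_self a S))
  have hinj : Set.InjOn (insert a) (∂^[k] (𝒜.memberSubfamily a) : Set (Finset α)) := by
    intro S hS T hT h
    rw [← erase_insert (hfree S hS), h, erase_insert (hfree T hT)]
  rw [← card_image_of_injOn hinj, ← card_union_of_disjoint hdisj]
  exact card_le_card hsub

theorem _root_.Set.Sized.memberSubfamily (h𝒜 : (𝒜 : Set (Finset α)).Sized (r + 1)) (a : α) :
    (𝒜.memberSubfamily a : Set (Finset α)).Sized r := by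
  intro S hS
  rw [mem_coe, mem_memberSubfamily] at hS
  simpa [card_insert_of_notMem hS.2] using h𝒜 hS.1

end Subfamilies

section Intersecting

variable {α : Type*} [DecidableEq α] {𝒜 ℬ : Finset (Finset α)} {X : Finset α} {r t : ℕ}

def TIntersecting (t : ℕ) (𝒜 : Finset (Finset α)) : Prop :=
  ∀ ⦃A⦄, A ∈ 𝒜 → ∀ ⦃B⦄, B ∈ 𝒜 → t ≤ #(A ∩ B)

namespace TIntersecting

theorem mono (h : 𝒜.TIntersecting t) (hℬ : ℬ ⊆ 𝒜) : ℬ.TIntersecting t :=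
  fun _ hA _ hB => h (hℬ hA) (hℬ hB)

theorem eq_empty_of_sized (h : 𝒜.TIntersecting (r + 1)) (h𝒜 : (𝒜 : Set (Finset α)).Sized r) :
    𝒜 = ∅ :=
  eq_empty_of_forall_notMem fun A hA => by simpa [h𝒜 hA] using h hA hA

theorem uvCompression (h : 𝒜.TIntersecting t) {u v : α} (huv : u ≠ v) :
    (𝓒 {u} {v} 𝒜).TIntersecting t := by
  have hcompressible : ∀ {Z}, Z ∈ 𝒜 → UV.compress {u} {v} Z ∉ 𝒜 → u ∉ Z ∧ v ∈ Z :=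
    fun hZ hcZ => UV.notMem_and_mem_of_compress_ne huv fun hc => hcZ (by rwa [hc])
  intro A hA B hB
  rw [UV.mem_compression] at hA hB
  rcases hA with ⟨hA, hcA⟩ | ⟨hA, Z, hZ, rfl⟩ <;> rcases hB with ⟨hB, hcB⟩ | ⟨hB, W, hW, rfl⟩
  · exact h hA hB
  · exact (le_min (h hA hW) (h hcA hW)).trans (UV.min_card_inter_le_card_inter_compress huv A W)
  · rw [inter_comm]
    exact (le_min (h hB hZ) (h hcB hZ)).trans (UV.min_card_inter_le_card_inter_compress huv B Z)
  · obtain ⟨huZ, hvZ⟩ := hcompressible hZ hA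
    obtain ⟨huW, hvW⟩ := hcompressible hW hB
    rw [UV.card_compress_inter_compress huv huZ hvZ huW hvW]
    exact h hZ hW

theorem memberSubfamily (h : 𝒜.TIntersecting t) {m : ℕ} (h𝒜 : (𝒜 : Set (Finset α)).Sized m)
    (hXcard : 2 * m < #X + t) {v : α}
    (hshift : ∀ u ∈ X, u ≠ v → UV.IsCompressed {u} {v} 𝒜) :
    (𝒜.memberSubfamily v).TIntersecting t := by
  -- If `insert v A` and `insert v B` met in only `t` points, shifting `v` in `insert v A` to a
  -- point `x ∈ X` outside both would leave `t - 1`.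
  intro A hA B hB
  rw [mem_memberSubfamily] at hA hB
  by_contra! hlt
  have hinter : #(insert v A ∩ insert v B) = #(A ∩ B) + 1 := by
    rw [← insert_inter_distrib, card_insert_of_notMem (by simp [hA.2])]
  have hunion : #(insert v A ∪ insert v B) < #X := by
    have := card_union_add_card_inter (insert v A) (insert v B)
    have := h hA.1 hB.1
    rw [h𝒜 hA.1, h𝒜 hB.1] at *
    omega
  obtain ⟨x, hxX, hx⟩ := exists_mem_notMem_of_card_lt_card hunion
  rw [mem_union, not_or] at hx
  have hxv : x ≠ v := fun hxv => hx.1 (hxv ▸ mem_insert_self v A)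
  have hmem : insert x A ∈ 𝒜 := by
    have := (hshift x hxX hxv).eq ▸ UV.compress_mem_compression (u := {x}) (v := {v}) hA.1
    rwa [UV.compress_singleton hxv, if_pos ⟨hx.1, mem_insert_self v A⟩, erase_insert hA.2] at this
  have := h hmem hB.1
  rw [insert_inter_of_notMem hx.2, inter_insert_of_notMem hA.2] at this
  omega

end TIntersecting

end Intersecting

section ShiftWeight

-- The `+ 1` makes deleting the element `0` lower the weight too.
def shiftWeight (𝒜 : Finset (Finset ℕ)) : ℕ := ∑ A ∈ 𝒜, ∑ a ∈ A, (a + 1)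

theorem sum_add_one_erase_lt {v : ℕ} {A : Finset ℕ} (hv : v ∈ A) :
    ∑ a ∈ A.erase v, (a + 1) < ∑ a ∈ A, (a + 1) := by
  rw [← sum_erase_add A _ hv]
  omega

theorem sum_add_one_compress_lt {u v : ℕ} (huv : u < v) {A : Finset ℕ}
    (h : UV.compress {u} {v} A ≠ A) :
    ∑ a ∈ UV.compress {u} {v} A, (a + 1) < ∑ a ∈ A, (a + 1) := by
  obtain ⟨huA, hvA⟩ := UV.notMem_and_mem_of_compress_ne huv.ne h
  rw [UV.compress_singleton huv.ne, if_pos ⟨huA, hvA⟩,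
    sum_insert fun hu => huA (mem_of_mem_erase hu), ← sum_erase_add A _ hvA]
  omega

theorem shiftWeight_uvCompression_lt {u v : ℕ} (huv : u < v) {𝒜 : Finset (Finset ℕ)}
    (h : 𝓒 {u} {v} 𝒜 ≠ 𝒜) : shiftWeight (𝓒 {u} {v} 𝒜) < shiftWeight 𝒜 := by
  have hmoved : {A ∈ 𝒜 | UV.compress {u} {v} A ∉ 𝒜}.Nonempty := by
    by_contra! hempty
    refine h ?_
    rw [UV.compression, filter_true_of_mem fun A hA => ?_, filter_false_of_mem fun A hA => ?_,
      union_empty]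
    · obtain ⟨B, hB, rfl⟩ := mem_image.1 hA
      by_contra hcB
      exact notMem_empty B (hempty ▸ mem_filter.2 ⟨hB, hcB⟩)
    · by_contra hcA
      exact notMem_empty A (hempty ▸ mem_filter.2 ⟨hA, hcA⟩)
  rw [shiftWeight, shiftWeight, UV.sum_compression,
    ← sum_filter_add_sum_filter_not 𝒜 fun A => UV.compress {u} {v} A ∈ 𝒜]
  refine add_lt_add_right (sum_lt_sum_of_nonempty hmoved fun A hA => ?_) _
  obtain ⟨hA𝒜, hcA⟩ := mem_filter.1 hA
  exact sum_add_one_compress_lt huv fun hc => hcA (by rwa [hc])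

theorem shiftWeight_memberSubfamily_add_shiftWeight_nonMemberSubfamily_lt {v : ℕ}
    {𝒜 : Finset (Finset ℕ)} (hv : ∃ A ∈ 𝒜, v ∈ A) :
    shiftWeight (𝒜.memberSubfamily v) + shiftWeight (𝒜.nonMemberSubfamily v) <
      shiftWeight 𝒜 := by
  obtain ⟨A, hA, hvA⟩ := hv
  have hinj : Set.InjOn (erase · v) ({B ∈ 𝒜 | v ∈ B} : Finset (Finset ℕ)) :=
    (erase_injOn' v).mono fun B hB => (mem_filter.1 hB).2
  rw [shiftWeight, shiftWeight, shiftWeight, memberSubfamily, nonMemberSubfamily, sum_image hinj,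
    ← sum_filter_add_sum_filter_not 𝒜 (v ∈ ·)]
  refine add_lt_add_left (sum_lt_sum_of_nonempty ⟨A, mem_filter.2 ⟨hA, hvA⟩⟩ fun B hB => ?_) _
  exact sum_add_one_erase_lt (mem_filter.1 hB).2

end ShiftWeight

theorem TIntersecting.mul_card_le_mul_card_shadow_iterate {k i : ℕ}
    {𝒜 : Finset (Finset ℕ)} (hint : 𝒜.TIntersecting (k + 1))
    (h𝒜 : (𝒜 : Set (Finset ℕ)).Sized (i + k)) :
    (i + k) * #𝒜 ≤ i * #(∂^[k] 𝒜) := by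
  obtain _ | j := i
  · simp [hint.eq_empty_of_sized (by simpa using h𝒜)]
  set X := 𝒜.sup id
  have hX : ∀ A ∈ 𝒜, A ⊆ X := fun A hA => le_sup (f := id) hA
  by_cases hsmall : #X < 2 * (j + 1) + k
  · exact mul_card_le_mul_card_shadow_iterate_of_card_lt h𝒜 hX hsmall
  obtain ⟨v, hvX, hvmax⟩ : ∃ v ∈ X, ∀ u ∈ X, u ≤ v :=
    ⟨X.max' (card_pos.1 (by omega)), max'_mem _ _, fun u hu => le_max' X u hu⟩
  by_cases hshift : ∀ u ∈ X, u ≠ v → UV.IsCompressed {u} {v} 𝒜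
  -- The `hweight` facts discharge the termination obligations of the recursive calls.
  · have hweight : shiftWeight (𝒜.memberSubfamily v) + shiftWeight (𝒜.nonMemberSubfamily v) <
        shiftWeight 𝒜 :=
      shiftWeight_memberSubfamily_add_shiftWeight_nonMemberSubfamily_lt (mem_sup.1 hvX)
    have hintNon : (𝒜.nonMemberSubfamily v).TIntersecting (k + 1) :=
      hint.mono (filter_subset _ _)
    have hnon := hintNon.mul_card_le_mul_card_shadow_iterate
      (h𝒜.mono (coe_subset.2 (filter_subset _ _)))
    have hmem : (j + 1 + k) * #(𝒜.memberSubfamily v) ≤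
        (j + 1) * #(∂^[k] (𝒜.memberSubfamily v)) := by
      have hintMem := hint.memberSubfamily h𝒜 (by omega) hshift
      have hsized := (Nat.add_right_comm j 1 k ▸ h𝒜).memberSubfamily v
      obtain _ | l := j
      · simp [hintMem.eq_empty_of_sized (by simpa using hsized)]
      have := hintMem.mul_card_le_mul_card_shadow_iterate hsized
      nlinarith
    have hsplit :=
      card_shadow_iterate_nonMemberSubfamily_add_card_shadow_iterate_memberSubfamily_le v k 𝒜
    calc (j + 1 + k) * #𝒜
        = (j + 1 + k) * #(𝒜.memberSubfamily v) + (j + 1 + k) * #(𝒜.nonMemberSubfamily v) := by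
          rw [← mul_add, card_memberSubfamily_add_card_nonMemberSubfamily]
      _ ≤ (j + 1) * #(∂^[k] (𝒜.memberSubfamily v)) + (j + 1) * #(∂^[k] (𝒜.nonMemberSubfamily v)) :=
          add_le_add hmem hnon
      _ ≤ (j + 1) * #(∂^[k] 𝒜) := by rw [← mul_add]; gcongr; omega
  · push Not at hshift
    obtain ⟨u, huX, huv, hcomp⟩ := hshift
    have hweight := shiftWeight_uvCompression_lt ((hvmax u huX).lt_of_ne huv) hcomp
    calc (j + 1 + k) * #𝒜 = (j + 1 + k) * #(𝓒 {u} {v} 𝒜) := by rw [UV.card_compression]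
      _ ≤ (j + 1) * #(∂^[k] (𝓒 {u} {v} 𝒜)) :=
        (hint.uvCompression huv).mul_card_le_mul_card_shadow_iterate
          (h𝒜.uvCompression (card_singleton _))
      _ ≤ (j + 1) * #(∂^[k] 𝒜) :=
        Nat.mul_le_mul_left _ (UV.card_shadow_iterate_compression_le u v k 𝒜)
termination_by shiftWeight 𝒜

theorem TIntersecting.card_lt_card_shadow_iterate {k i : ℕ} (hk : 1 ≤ k) {𝒜 : Finset (Finset ℕ)}
    (hint : 𝒜.TIntersecting (k + 1)) (h𝒜 : (𝒜 : Set (Finset ℕ)).Sized (i + k))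
    (hne : 𝒜.Nonempty) : #𝒜 < #(∂^[k] 𝒜) := by
  have hkatona := hint.mul_card_le_mul_card_shadow_iterate h𝒜
  have hpos := hne.card_pos
  by_contra! hle
  nlinarith

section ImageSdiff

variable {α : Type*} [DecidableEq α] {X : Finset α} {𝒢 : Finset (Finset α)}

theorem card_image_sdiff (h𝒢 : ∀ B ∈ 𝒢, B ⊆ X) : #(𝒢.image (X \ ·)) = #𝒢 :=
  card_image_of_injOn fun B hB B' hB' h => by
    rw [← sdiff_sdiff_eq_self (h𝒢 B hB), ← sdiff_sdiff_eq_self (h𝒢 B' hB')]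
    exact congrArg (X \ ·) h

theorem _root_.Set.Sized.image_sdiff {r : ℕ} (h𝒢r : (𝒢 : Set (Finset α)).Sized r)
    (h𝒢 : ∀ B ∈ 𝒢, B ⊆ X) : (𝒢.image (X \ ·) : Set (Finset α)).Sized (#X - r) := by
  intro A hA
  obtain ⟨B, hB, rfl⟩ := mem_image.1 (mem_coe.1 hA)
  rw [card_sdiff_of_subset (h𝒢 B hB), h𝒢r hB]

theorem tIntersecting_image_sdiff {s : ℕ} (h𝒢 : ∀ B ∈ 𝒢, B ⊆ X)
    (hunion : ∀ B ∈ 𝒢, ∀ B' ∈ 𝒢, #(B ∪ B') ≤ s) :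
    (𝒢.image (X \ ·)).TIntersecting (#X - s) := by
  intro A hA A' hA'
  obtain ⟨B, hB, rfl⟩ := mem_image.1 hA
  obtain ⟨B', hB', rfl⟩ := mem_image.1 hA'
  rw [← sdiff_union_distrib, card_sdiff_of_subset (union_subset (h𝒢 B hB) (h𝒢 B' hB'))]
  exact Nat.sub_le_sub_left (hunion B hB B' hB') _

end ImageSdiff

theorem card_add_card_le_choose_of_union_le {X : Finset ℕ} {ℱ 𝒢 : Finset (Finset ℕ)}
    {i r s : ℕ} (hirs : i + r = s + 1) (hsX : s + 2 ≤ #X)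
    (hℱ : ∀ A ∈ ℱ, A ⊆ X) (h𝒢 : ∀ B ∈ 𝒢, B ⊆ X)
    (hℱi : (ℱ : Set (Finset ℕ)).Sized i) (h𝒢r : (𝒢 : Set (Finset ℕ)).Sized r)
    (h𝒢𝒢 : ∀ B ∈ 𝒢, ∀ B' ∈ 𝒢, #(B ∪ B') ≤ s) (hℱ𝒢 : ∀ A ∈ ℱ, ∀ B ∈ 𝒢, #(A ∪ B) ≤ s) :
    #ℱ + #𝒢 ≤ (#X).choose i ∧ (𝒢.Nonempty → #ℱ + #𝒢 < (#X).choose i) := by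
  set k := #X - s - 1
  set 𝒜 := 𝒢.image (X \ ·)
  have h𝒜 : (𝒜 : Set (Finset ℕ)).Sized (i + k) := by
    have := h𝒢r.image_sdiff h𝒢
    rwa [show #X - r = i + k by omega] at this
  have hint : 𝒜.TIntersecting (k + 1) := by
    simpa [show #X - s = k + 1 by omega] using tIntersecting_image_sdiff h𝒢 h𝒢𝒢
  have hshadow : ∀ S ∈ ∂^[k] 𝒜, S ⊆ X ∧ #S = i ∧ ∃ B ∈ 𝒢, Disjoint S B := by
    intro S hS
    obtain ⟨_, hA, hSA, -⟩ := mem_shadow_iterate_iff_exists_sdiff.1 hS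
    obtain ⟨B, hB, rfl⟩ := mem_image.1 hA
    obtain ⟨hSX, hSB⟩ := subset_sdiff.1 hSA
    exact ⟨hSX, by simpa using h𝒜.shadow_iterate hS, B, hB, hSB⟩
  have hdisj : Disjoint ℱ (∂^[k] 𝒜) := disjoint_left.2 fun A hA hA𝒜 => by
    obtain ⟨-, hAi, B, hB, hAB⟩ := hshadow A hA𝒜
    have := hℱ𝒢 A hA B hB
    rw [card_union_of_disjoint hAB, hAi, h𝒢r hB] at this
    omega
  have hcount : #ℱ + #(∂^[k] 𝒜) ≤ (#X).choose i := by
    rw [← card_union_of_disjoint hdisj, ← card_powersetCard]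
    refine card_le_card (union_subset (fun A hA => ?_) fun S hS => ?_)
    · exact mem_powersetCard.2 ⟨hℱ A hA, hℱi hA⟩
    · exact mem_powersetCard.2 ⟨(hshadow S hS).1, (hshadow S hS).2.1⟩
  have hlt : 𝒢.Nonempty → #𝒢 < #(∂^[k] 𝒜) := fun hne =>
    card_image_sdiff h𝒢 ▸ hint.card_lt_card_shadow_iterate (by omega) h𝒜 (hne.image _)
  have hle : #𝒢 ≤ #(∂^[k] 𝒜) :=
    𝒢.eq_empty_or_nonempty.elim (fun h => by simp [h]) fun hne => (hlt hne).le
  exact ⟨by omega, fun hne => by have := hlt hne; omega⟩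

end Finset

theorem stmt_11_general (n s i : ℕ) (hs2 : 2 ≤ s) (hsn : s ≤ n - 2)
    (hi : 2 * i ≤ s)
    (F : Finset (Finset ℕ))
    (hF : ∀ A ∈ F, A ⊆ Finset.Icc 1 n)
    (hunion : ∀ A ∈ F, ∀ B ∈ F, (A ∪ B).card ≤ s) :
    (F.filter (fun A => A.card = i)).card +
        (F.filter (fun A => A.card = s + 1 - i)).card ≤ n.choose i ∧
      ((F.filter (fun A => A.card = i)).card +
          (F.filter (fun A => A.card = s + 1 - i)).card = n.choose i ↔
        F.filter (fun A => A.card = i) = (Finset.Icc 1 n).powersetCard i ∧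
          F.filter (fun A => A.card = s + 1 - i) = ∅) := by
  have hX : #(Icc 1 n) = n := by simp
  have hmem : ∀ {m A}, A ∈ F.filter (fun A => A.card = m) → A ∈ F ∧ A.card = m := mem_filter.1
  obtain ⟨hle, hlt⟩ := card_add_card_le_choose_of_union_le (X := Icc 1 n) (i := i)
    (r := s + 1 - i) (s := s) (by omega) (by rw [hX]; omega) (fun A hA => hF A (hmem hA).1)
    (fun B hB => hF B (hmem hB).1) (fun A hA => (hmem hA).2) (fun B hB => (hmem hB).2)
    (fun B hB B' hB' => hunion B (hmem hB).1 B' (hmem hB').1)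
    (fun A hA B hB => hunion A (hmem hA).1 B (hmem hB).1)
  rw [hX] at hle hlt
  refine ⟨hle, fun heq => ?_, fun ⟨hFi, hG⟩ => by simp [hFi, hG, hX]⟩
  have hG := not_nonempty_iff_eq_empty.1 fun hne => (hlt hne).ne heq
  refine ⟨eq_of_subset_of_card_le (fun A hA => ?_) ?_, hG⟩
  · exact mem_powersetCard.2 ⟨hF A (hmem hA).1, (hmem hA).2⟩
  · simpa [hG, hX] using heq.ge

theorem stmt_11 (n s i : ℕ) (hs2 : 2 ≤ s) (hsn : s ≤ n - 2)
    (hi1 : 1 ≤ i) (hi : 2 * i ≤ s)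
    (F : Finset (Finset ℕ))
    (hF : ∀ A ∈ F, A ⊆ Finset.Icc 1 n)
    (hunion : ∀ A ∈ F, ∀ B ∈ F, (A ∪ B).card ≤ s) :
    (F.filter (fun A => A.card = i)).card +
        (F.filter (fun A => A.card = s + 1 - i)).card ≤ n.choose i ∧
      ((F.filter (fun A => A.card = i)).card +
          (F.filter (fun A => A.card = s + 1 - i)).card = n.choose i ↔
        F.filter (fun A => A.card = i) = (Finset.Icc 1 n).powersetCard i ∧
          F.filter (fun A => A.card = s + 1 - i) = ∅) :=
  stmt_11_general n s i hs2 hsn hi F hF hunion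
end

section
/- Let 2 ≤ s ≤ n - 2 with s = 2d, and let F ⊆ 2^[n] be an s-union family. Then |F| ≤ Σ_{i=0}^{d} C(n, i). -/
open Finset
open scoped FinsetFamily

namespace KatonaProof

/-- `F` is an `s`-union family. -/
def SU (s : ℕ) (F : Finset (Finset ℕ)) : Prop :=
  ∀ A ∈ F, ∀ B ∈ F, (A ∪ B).card ≤ s

/-- `F` is shifted (left-compressed), on ground sets of positive naturals. -/
def Shifted (F : Finset (Finset ℕ)) : Prop :=
  ∀ i j A, 0 < i → i < j → A ∈ F → j ∈ A → i ∉ A → insert i (A.erase j) ∈ F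

lemma compress_eq_insert_erase {i j : ℕ} (hij : i ≠ j) {X : Finset ℕ}
    (hj : j ∈ X) (hi : i ∉ X) :
    UV.compress {i} {j} X = insert i (X.erase j) := by
  rw [UV.compress, if_pos ⟨Finset.disjoint_singleton_left.2 hi, Finset.singleton_subset_iff.2 hj⟩]
  ext x
  simp only [sup_eq_union, mem_sdiff, mem_union, mem_singleton, mem_insert, mem_erase]
  constructor
  · rintro ⟨hx | hx, hxj⟩
    · exact Or.inr ⟨hxj, hx⟩
    · exact Or.inl hx
  · rintro (rfl | ⟨hxj, hx⟩)
    · exact ⟨Or.inr rfl, hij⟩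
    · exact ⟨Or.inl hx, hxj⟩

lemma compress_eq_self {i j : ℕ} {X : Finset ℕ} (h : ¬(j ∈ X ∧ i ∉ X)) :
    UV.compress {i} {j} X = X := by
  rw [UV.compress, if_neg]
  rintro ⟨h1, h2⟩
  exact h ⟨Finset.singleton_subset_iff.1 h2, Finset.disjoint_singleton_left.1 h1⟩

/-- Structure of members of the compression. -/
lemma mem_compression_cases {i j : ℕ} (hij : i ≠ j) {F : Finset (Finset ℕ)} {A : Finset ℕ}
    (hA : A ∈ 𝓒 {i} {j} F) :
    (A ∈ F ∧ (j ∈ A → i ∉ A → insert i (A.erase j) ∈ F)) ∨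
      (∃ A₀ ∈ F, j ∈ A₀ ∧ i ∉ A₀ ∧ A = insert i (A₀.erase j)) := by
  rw [UV.mem_compression] at hA
  obtain ⟨h1, h2⟩ | ⟨h1, B, hB, hBA⟩ := hA
  · refine Or.inl ⟨h1, fun hj hi => ?_⟩
    rwa [compress_eq_insert_erase hij hj hi] at h2
  · by_cases hc : j ∈ B ∧ i ∉ B
    · exact Or.inr ⟨B, hB, hc.1, hc.2, by rw [← hBA, compress_eq_insert_erase hij hc.1 hc.2]⟩
    · rw [compress_eq_self hc] at hBA
      exact absurd (hBA ▸ hB) h1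

lemma insert_erase_union_of_notMem {i j : ℕ} {A B : Finset ℕ} (hjB : j ∉ B) :
    insert i (A.erase j) ∪ B = insert i ((A ∪ B).erase j) := by
  ext x
  simp only [mem_union, mem_insert, mem_erase]
  constructor
  · rintro ((rfl | ⟨hxj, hx⟩) | hx)
    · exact Or.inl rfl
    · exact Or.inr ⟨hxj, Or.inl hx⟩
    · exact Or.inr ⟨fun h => hjB (h ▸ hx), Or.inr hx⟩
  · rintro (rfl | ⟨hxj, hx | hx⟩)
    · exact Or.inl (Or.inl rfl)
    · exact Or.inl (Or.inr ⟨hxj, hx⟩)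
    · exact Or.inr hx

/-- Key case: image set against an original set whose own compression is available. -/
lemma union_card_le_img_orig {s i j : ℕ} (hij : i < j) {F : Finset (Finset ℕ)} (hF : SU s F)
    {A₀ B : Finset ℕ} (hA₀ : A₀ ∈ F) (hjA : j ∈ A₀) (hiA : i ∉ A₀) (hB : B ∈ F)
    (hBc : j ∈ B → i ∉ B → insert i (B.erase j) ∈ F) :
    (insert i (A₀.erase j) ∪ B).card ≤ s := by
  by_cases hjB : j ∈ B
  · by_cases hiB : i ∈ B
    · -- subset of A₀ ∪ B
      refine le_trans (card_le_card ?_) (hF A₀ hA₀ B hB)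
      intro x hx
      simp only [mem_union, mem_insert, mem_erase] at hx ⊢
      rcases hx with (rfl | ⟨_, hx⟩) | hx
      · exact Or.inr hiB
      · exact Or.inl hx
      · exact Or.inr hx
    · -- use the compression of B
      have hB' : insert i (B.erase j) ∈ F := hBc hjB hiB
      have : insert i (A₀.erase j) ∪ B = A₀ ∪ insert i (B.erase j) := by
        ext x
        simp only [mem_union, mem_insert, mem_erase]
        constructor
        · rintro ((rfl | ⟨hxj, hx⟩) | hx)
          · exact Or.inr (Or.inl rfl)
          · exact Or.inl hx
          · by_cases hxj : x = j
            · exact Or.inl (hxj ▸ hjA)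
            · exact Or.inr (Or.inr ⟨hxj, hx⟩)
        · rintro (hx | (rfl | ⟨hxj, hx⟩))
          · by_cases hxj : x = j
            · exact Or.inr (hxj ▸ hjB)
            · exact Or.inl (Or.inr ⟨hxj, hx⟩)
          · exact Or.inl (Or.inl rfl)
          · exact Or.inr hx
      rw [this]
      exact hF A₀ hA₀ _ hB'
  · -- j ∉ B : the union is insert i ((A₀ ∪ B).erase j), same card as A₀ ∪ B at most
    rw [insert_erase_union_of_notMem hjB]
    have h1 : (insert i ((A₀ ∪ B).erase j)).card ≤ ((A₀ ∪ B).erase j).card + 1 :=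
      card_insert_le _ _
    have h2 : ((A₀ ∪ B).erase j).card = (A₀ ∪ B).card - 1 :=
      card_erase_of_mem (mem_union_left _ hjA)
    have h3 : 0 < (A₀ ∪ B).card := card_pos.2 ⟨j, mem_union_left _ hjA⟩
    have h4 : (A₀ ∪ B).card ≤ s := hF A₀ hA₀ B hB
    omega

/-- Compression preserves the `s`-union property. -/
lemma su_compression {s i j : ℕ} (hij : i < j) {F : Finset (Finset ℕ)} (hF : SU s F) :
    SU s (𝓒 {i} {j} F) := by
  have hij' : i ≠ j := hij.ne
  intro A hA B hB
  obtain ⟨hA1, hA2⟩ | ⟨A₀, hA₀, hjA, hiA, rfl⟩ := mem_compression_cases hij' hA <;>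
    obtain ⟨hB1, hB2⟩ | ⟨B₀, hB₀, hjB, hiB, rfl⟩ := mem_compression_cases hij' hB
  · exact hF A hA1 B hB1
  · rw [union_comm]
    exact union_card_le_img_orig hij hF hB₀ hjB hiB hA1 hA2
  · exact union_card_le_img_orig hij hF hA₀ hjA hiA hB1 hB2
  · -- both images
    have key : insert i (A₀.erase j) ∪ insert i (B₀.erase j)
        = insert i ((A₀ ∪ B₀).erase j) := by
      ext x
      simp only [mem_union, mem_insert, mem_erase]
      constructor
      · rintro ((rfl | ⟨hxj, hx⟩) | (rfl | ⟨hxj, hx⟩))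
        · exact Or.inl rfl
        · exact Or.inr ⟨hxj, Or.inl hx⟩
        · exact Or.inl rfl
        · exact Or.inr ⟨hxj, Or.inr hx⟩
      · rintro (rfl | ⟨hxj, hx | hx⟩)
        · exact Or.inl (Or.inl rfl)
        · exact Or.inl (Or.inr ⟨hxj, hx⟩)
        · exact Or.inr (Or.inr ⟨hxj, hx⟩)
    rw [key]
    have hi' : i ∉ (A₀ ∪ B₀).erase j := by
      simp only [mem_erase, mem_union]
      rintro ⟨-, hx | hx⟩
      exacts [hiA hx, hiB hx]
    have h1 : (insert i ((A₀ ∪ B₀).erase j)).card = ((A₀ ∪ B₀).erase j).card + 1 :=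
      card_insert_of_notMem hi'
    have h2 : ((A₀ ∪ B₀).erase j).card = (A₀ ∪ B₀).card - 1 :=
      card_erase_of_mem (mem_union_left _ hjA)
    have h3 : 0 < (A₀ ∪ B₀).card := card_pos.2 ⟨j, mem_union_left _ hjA⟩
    have h4 : (A₀ ∪ B₀).card ≤ s := hF A₀ hA₀ B₀ hB₀
    omega

/-- The weight measure used to show iterated compression terminates. -/
def mu (F : Finset (Finset ℕ)) : ℕ := ∑ A ∈ F, ∑ x ∈ A, x

lemma mu_compression_lt {i j : ℕ} (hi : 0 < i) (hij : i < j) {F : Finset (Finset ℕ)}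
    {A : Finset ℕ} (hA : A ∈ F) (hjA : j ∈ A) (hiA : i ∉ A)
    (hmoved : insert i (A.erase j) ∉ F) :
    mu (𝓒 {i} {j} F) < mu F := by
  classical
  have hij' : i ≠ j := hij.ne
  set f : Finset ℕ → Finset ℕ := UV.compress {i} {j} with hf
  set t : Finset (Finset ℕ) := F.filter (fun X => f X ∉ F) with ht
  have htA : A ∈ t := by
    rw [ht, mem_filter]
    exact ⟨hA, by rwa [hf, compress_eq_insert_erase hij' hjA hiA]⟩
  have hdisj : Disjoint (F.filter (fun X => f X ∈ F)) ((F.image f).filter (fun X => X ∉ F)) := by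
    rw [Finset.disjoint_left]
    intro X hX hX'
    exact (mem_filter.1 hX').2 (mem_filter.1 hX).1
  have himg : (F.image f).filter (fun X => X ∉ F) = t.image f := by
    ext X
    simp only [mem_filter, mem_image, ht]
    constructor
    · rintro ⟨⟨B, hB, rfl⟩, hX⟩
      exact ⟨B, ⟨hB, hX⟩, rfl⟩
    · rintro ⟨B, ⟨hB, hfB⟩, rfl⟩
      exact ⟨⟨B, hB, rfl⟩, hfB⟩
  have hcomp : 𝓒 {i} {j} F =
      (F.filter (fun X => f X ∈ F)) ∪ ((F.image f).filter (fun X => X ∉ F)) := rfl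
  have hinj : ∀ X ∈ t, ∀ Y ∈ t, f X = f Y → X = Y := by
    intro X hX Y hY hXY
    have hX' : X ∈ ({a ∈ F | UV.compress {i} {j} a ∉ F} : Finset (Finset ℕ)) := hX
    have hY' : Y ∈ ({a ∈ F | UV.compress {i} {j} a ∉ F} : Finset (Finset ℕ)) := hY
    exact UV.compress_injOn (Finset.mem_coe.2 hX') (Finset.mem_coe.2 hY') hXY
  have hsum : mu (𝓒 {i} {j} F)
      = (∑ X ∈ F.filter (fun X => f X ∈ F), ∑ x ∈ X, x) + ∑ X ∈ t, ∑ x ∈ f X, x := by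
    rw [mu, hcomp, Finset.sum_union hdisj, himg, Finset.sum_image hinj]
  have hsplit : mu F = (∑ X ∈ F.filter (fun X => f X ∈ F), ∑ x ∈ X, x)
      + ∑ X ∈ t, ∑ x ∈ X, x := by
    rw [mu, ht, Finset.sum_filter_add_sum_filter_not]
  have hlt : ∑ X ∈ t, ∑ x ∈ f X, x < ∑ X ∈ t, ∑ x ∈ X, x := by
    refine Finset.sum_lt_sum_of_nonempty ⟨A, htA⟩ ?_
    intro X hX
    rw [ht, mem_filter] at hX
    obtain ⟨hXF, hfX⟩ := hX
    have hc : j ∈ X ∧ i ∉ X := by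
      by_contra hc
      rw [hf, compress_eq_self hc] at hfX
      exact hfX hXF
    rw [hf, compress_eq_insert_erase hij' hc.1 hc.2]
    have hie : i ∉ X.erase j := fun h => hc.2 (mem_of_mem_erase h)
    rw [Finset.sum_insert hie]
    have herase : j + ∑ x ∈ X.erase j, x = ∑ x ∈ X, x := Finset.add_sum_erase _ (fun x => x) hc.1
    omega
  omega

/-- Every `s`-union family on `[n]` can be replaced by a shifted one of the same size. -/
lemma exists_shifted (n s : ℕ) :
    ∀ m (F : Finset (Finset ℕ)), mu F ≤ m → (∀ A ∈ F, A ⊆ Finset.Icc 1 n) → SU s F →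
    ∃ G : Finset (Finset ℕ), Shifted G ∧ G.card = F.card ∧
      (∀ A ∈ G, A ⊆ Finset.Icc 1 n) ∧ SU s G := by
  intro m
  induction m using Nat.strong_induction_on with
  | _ m ih =>
    intro F hm hground hsu
    by_cases hsh : Shifted F
    · exact ⟨F, hsh, rfl, hground, hsu⟩
    · rw [Shifted] at hsh
      push_neg at hsh
      obtain ⟨i, j, A, hi, hij, hA, hjA, hiA, hmoved⟩ := hsh
      have hij' : i ≠ j := hij.ne
      have hμ : mu (𝓒 {i} {j} F) < mu F := mu_compression_lt hi hij hA hjA hiA hmoved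
      have hμm : mu (𝓒 {i} {j} F) ≤ mu (𝓒 {i} {j} F) := le_rfl
      have hmm : mu (𝓒 {i} {j} F) < m + 1 := lt_of_lt_of_le hμ (le_trans hm (Nat.le_succ m))
      -- ground preservation
      have hground' : ∀ B ∈ 𝓒 {i} {j} F, B ⊆ Finset.Icc 1 n := by
        intro B hB
        obtain ⟨hB1, -⟩ | ⟨B₀, hB₀, hjB, hiB, rfl⟩ := mem_compression_cases hij' hB
        · exact hground B hB1
        · intro x hx
          rcases mem_insert.1 hx with rfl | hx
          · have hjn : j ∈ Finset.Icc 1 n := hground B₀ hB₀ hjB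
            rw [Finset.mem_Icc] at hjn ⊢
            omega
          · exact hground B₀ hB₀ (mem_of_mem_erase hx)
      have hsu' : SU s (𝓒 {i} {j} F) := su_compression hij hsu
      obtain ⟨G, h1, h2, h3, h4⟩ :=
        ih (mu (𝓒 {i} {j} F)) (lt_of_lt_of_le hμ hm) (𝓒 {i} {j} F) le_rfl hground' hsu'
      exact ⟨G, h1, h2.trans (UV.card_compression _ _ _), h3, h4⟩

lemma sum_choose_pascal (n d : ℕ) :
    ∑ i ∈ Finset.range (d + 1), (n + 1).choose i
      = (∑ i ∈ Finset.range (d + 1), n.choose i) + ∑ i ∈ Finset.range d, n.choose i := by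
  induction d with
  | zero => simp
  | succ d ihd =>
    have hcs : (n + 1).choose (d + 1) = n.choose d + n.choose (d + 1) :=
      Nat.choose_succ_succ _ _
    rw [Finset.sum_range_succ, ihd, hcs, Finset.sum_range_succ (f := fun i => n.choose i) (n := d + 1),
      Finset.sum_range_succ (f := fun i => n.choose i) (n := d)]
    ring

/-- The main induction for shifted families. -/
lemma katona_shifted :
    ∀ n d (F : Finset (Finset ℕ)), Shifted F → (∀ A ∈ F, A ⊆ Finset.Icc 1 n) →
    SU (2 * d) F → (d = 0 ∨ 2 * d < n) →
    F.card ≤ ∑ i ∈ Finset.range (d + 1), n.choose i := by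
  intro n
  induction n with
  | zero =>
    intro d F hsh hground hsu hd
    have hd0 : d = 0 := by omega
    subst hd0
    have : F ⊆ {∅} := by
      intro A hA
      have := hsu A hA A hA
      simp only [Finset.union_self] at this
      simp [Finset.card_eq_zero.1 (Nat.le_zero.1 this)]
    simpa using card_le_card this
  | succ n ih =>
    intro d F hsh hground hsu hd
    rcases Nat.eq_zero_or_pos d with rfl | hdpos
    · -- d = 0
      have : F ⊆ {∅} := by
        intro A hA
        have := hsu A hA A hA
        simp only [Finset.union_self] at this
        simp [Finset.card_eq_zero.1 (Nat.le_zero.1 this)]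
      calc F.card ≤ 1 := by simpa using card_le_card this
        _ ≤ _ := by simp
    · have h2dn : 2 * d ≤ n := by omega
      rcases eq_or_lt_of_le h2dn with h2deq | h2dlt
      · -- boundary case: n = 2d, ground has 2d+1 elements; complement pairing
        subst h2deq
        -- `F` and its image under complementation are disjoint subsets of the powerset
        set g : Finset ℕ := Finset.Icc 1 (2 * d + 1) with hg
        have hginj : ∀ X ∈ F, ∀ Y ∈ F, g \ X = g \ Y → X = Y := by
          intro X hX Y hY hXY
          have h1 : g \ (g \ X) = X := Finset.sdiff_sdiff_eq_self (hground X hX)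
          have h2 : g \ (g \ Y) = Y := Finset.sdiff_sdiff_eq_self (hground Y hY)
          rw [← h1, ← h2, hXY]
        have hdisj : Disjoint F (F.image (fun X => g \ X)) := by
          rw [Finset.disjoint_right]
          rintro X hX hXF
          obtain ⟨Y, hY, rfl⟩ := Finset.mem_image.1 hX
          have hcard : ((g \ Y) ∪ Y).card ≤ 2 * d := hsu _ hXF Y hY
          have : (g \ Y) ∪ Y = g := by
            rw [Finset.sdiff_union_self_eq_union, Finset.union_eq_left.2 (hground Y hY)]
          rw [this] at hcard
          have : g.card = 2 * d + 1 := by rw [hg, Nat.card_Icc]; omega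
          omega
        have hsub : F ∪ F.image (fun X => g \ X) ⊆ g.powerset := by
          intro X hX
          rcases Finset.mem_union.1 hX with hX | hX
          · exact Finset.mem_powerset.2 (hground X hX)
          · obtain ⟨Y, hY, rfl⟩ := Finset.mem_image.1 hX
            exact Finset.mem_powerset.2 (Finset.sdiff_subset)
        have hcard2 : F.card + F.card ≤ 2 ^ (2 * d + 1) := by
          have h1 : (F ∪ F.image (fun X => g \ X)).card
              = F.card + (F.image (fun X => g \ X)).card :=
            Finset.card_union_of_disjoint hdisj
          have h2 : (F.image (fun X => g \ X)).card = F.card :=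
            Finset.card_image_of_injOn hginj
          have h3 : (F ∪ F.image (fun X => g \ X)).card ≤ g.powerset.card :=
            card_le_card hsub
          rw [Finset.card_powerset] at h3
          have hgc : g.card = 2 * d + 1 := by rw [hg, Nat.card_Icc]; omega
          rw [hgc] at h3
          omega
        have hhalf : ∑ i ∈ Finset.range (d + 1), (2 * d + 1).choose i = 4 ^ d :=
          Nat.sum_range_choose_halfway d
        have h4d : 2 ^ (2 * d + 1) = 2 * 4 ^ d := by
          rw [pow_succ, pow_mul]; ring
        rw [hhalf]
        omega
      · -- main case: 2d < n, split on the element n+1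
        set F₀ : Finset (Finset ℕ) := F.filter (fun A => (n+1) ∉ A) with hF₀
        set F₁ : Finset (Finset ℕ) := (F.filter (fun A => (n+1) ∈ A)).image
          (fun A => A.erase (n+1)) with hF₁
        have hcardsplit : F.card = F₀.card + F₁.card := by
          have h1 : F₁.card = (F.filter (fun A => (n+1) ∈ A)).card := by
            rw [hF₁]
            refine Finset.card_image_of_injOn ?_
            intro X hX Y hY hXY
            rw [Finset.coe_filter] at hX hY
            obtain ⟨-, hX2⟩ := hX
            obtain ⟨-, hY2⟩ := hY
            rw [← Finset.insert_erase hX2, ← Finset.insert_erase hY2]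
            exact congrArg (insert (n+1)) hXY
          rw [h1, hF₀, add_comm]
          exact (Finset.card_filter_add_card_filter_not _).symm
        -- F₀ facts
        have hF₀sh : Shifted F₀ := by
          intro i j A hi hij hA hjA hiA
          rw [hF₀, mem_filter] at hA ⊢
          refine ⟨hsh i j A hi hij hA.1 hjA hiA, ?_⟩
          simp only [mem_insert, mem_erase]
          rintro (rfl | ⟨-, hmem⟩)
          · have : j ∈ Finset.Icc 1 (n+1) := hground A hA.1 hjA
            rw [Finset.mem_Icc] at this
            omega
          · exact hA.2 hmem
        have hF₀g : ∀ A ∈ F₀, A ⊆ Finset.Icc 1 n := by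
          intro A hA x hx
          rw [hF₀, mem_filter] at hA
          have := hground A hA.1 hx
          rw [Finset.mem_Icc] at this ⊢
          have : x ≠ n + 1 := fun h => hA.2 (h ▸ hx)
          omega
        have hF₀su : SU (2 * d) F₀ := by
          intro A hA B hB
          rw [hF₀, mem_filter] at hA hB
          exact hsu A hA.1 B hB.1
        -- F₁ facts
        have hF₁mem : ∀ B ∈ F₁, insert (n+1) B ∈ F ∧ (n+1) ∉ B := by
          intro B hB
          rw [hF₁, Finset.mem_image] at hB
          obtain ⟨A, hA, rfl⟩ := hB
          rw [mem_filter] at hA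
          refine ⟨?_, Finset.notMem_erase _ _⟩
          show insert (n+1) (A.erase (n+1)) ∈ F
          rw [Finset.insert_erase hA.2]
          exact hA.1
        have hF₁g : ∀ B ∈ F₁, B ⊆ Finset.Icc 1 n := by
          intro B hB x hx
          obtain ⟨hBF, hBn⟩ := hF₁mem B hB
          have hxg : x ∈ Finset.Icc 1 (n+1) :=
            hground _ hBF (Finset.mem_insert.2 (Or.inr hx))
          rw [Finset.mem_Icc] at hxg ⊢
          have : x ≠ n + 1 := fun h => hBn (h ▸ hx)
          omega
        have hF₁sh : Shifted F₁ := by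
          intro i j B hi hij hB hjB hiB
          obtain ⟨hBF, hBn⟩ := hF₁mem B hB
          have hjn : j ≤ n := by
            have := hF₁g B hB hjB; rw [Finset.mem_Icc] at this; omega
          have hiA : i ∉ insert (n+1) B := by
            simp only [mem_insert]
            rintro (rfl | h)
            · omega
            · exact hiB h
          have hjA : j ∈ insert (n+1) B := Finset.mem_insert.2 (Or.inr hjB)
          have hshift := hsh i j _ hi hij hBF hjA hiA
          have hkey : insert i ((insert (n+1) B).erase j) = insert (n+1) (insert i (B.erase j)) := by
            rw [Finset.erase_insert_of_ne (by omega : (n+1 : ℕ) ≠ j)]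
            exact Finset.insert_comm _ _ _
          rw [hkey] at hshift
          rw [hF₁, Finset.mem_image]
          refine ⟨insert (n+1) (insert i (B.erase j)), ?_, ?_⟩
          · rw [mem_filter]
            exact ⟨hshift, Finset.mem_insert_self _ _⟩
          · rw [Finset.erase_insert]
            simp only [mem_insert, mem_erase]
            rintro (rfl | ⟨-, h⟩)
            · omega
            · exact hBn h
        have hF₁su : SU (2 * (d - 1)) F₁ := by
          intro B₁ hB₁ B₂ hB₂
          obtain ⟨hB₁F, hB₁n⟩ := hF₁mem B₁ hB₁
          obtain ⟨hB₂F, hB₂n⟩ := hF₁mem B₂ hB₂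
          have hU : ((insert (n+1) B₁) ∪ (insert (n+1) B₂)).card ≤ 2 * d :=
            hsu _ hB₁F _ hB₂F
          have hUeq : (insert (n+1) B₁) ∪ (insert (n+1) B₂) = insert (n+1) (B₁ ∪ B₂) := by
            simp [Finset.insert_union, Finset.union_insert]
          have hnotin : (n+1) ∉ B₁ ∪ B₂ := by
            simp only [mem_union]
            rintro (h | h)
            exacts [hB₁n h, hB₂n h]
          have hcardU : (B₁ ∪ B₂).card + 1 ≤ 2 * d := by
            rw [hUeq, Finset.card_insert_of_notMem hnotin] at hU
            omega
          -- find a fresh element x ≤ n outside B₁ ∪ B₂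
          have hsubU : B₁ ∪ B₂ ⊆ Finset.Icc 1 n :=
            Finset.union_subset (hF₁g B₁ hB₁) (hF₁g B₂ hB₂)
          have hproper : (B₁ ∪ B₂).card < (Finset.Icc 1 n).card := by
            rw [Nat.card_Icc]
            omega
          obtain ⟨x, hxg, hxU⟩ : ∃ x, x ∈ Finset.Icc 1 n ∧ x ∉ B₁ ∪ B₂ := by
            by_contra hcon
            push_neg at hcon
            have : Finset.Icc 1 n ⊆ B₁ ∪ B₂ := fun y hy => hcon y hy
            have := card_le_card this
            omega
          rw [Finset.mem_Icc] at hxg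
          have hxB₂ : x ∉ insert (n+1) B₂ := by
            simp only [mem_insert]
            rintro (rfl | h)
            · omega
            · exact hxU (mem_union_right _ h)
          -- shift n+1 down to x in insert (n+1) B₂
          have hxn : (n+1) ∈ insert (n+1) B₂ := Finset.mem_insert_self _ _
          have hshift := hsh x (n+1) _ (by omega) (by omega) hB₂F hxn hxB₂
          have herase : (insert (n+1) B₂).erase (n+1) = B₂ := Finset.erase_insert hB₂n
          rw [herase] at hshift
          have hU2 : ((insert (n+1) B₁) ∪ (insert x B₂)).card ≤ 2 * d :=
            hsu _ hB₁F _ hshift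
          have hUeq2 : (insert (n+1) B₁) ∪ (insert x B₂)
              = insert (n+1) (insert x (B₁ ∪ B₂)) := by
            rw [Finset.insert_union, Finset.union_insert, Finset.insert_comm]
          have hxnot : x ∉ B₁ ∪ B₂ := hxU
          have hn1not : (n+1) ∉ insert x (B₁ ∪ B₂) := by
            simp only [mem_insert]
            rintro (h | h)
            · omega
            · exact hnotin h
          rw [hUeq2, Finset.card_insert_of_notMem hn1not,
            Finset.card_insert_of_notMem hxnot] at hU2
          omega
        -- apply the induction hypotheses
        have hbound₀ : F₀.card ≤ ∑ i ∈ Finset.range (d + 1), n.choose i :=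
          ih d F₀ hF₀sh hF₀g hF₀su (Or.inr h2dlt)
        have hbound₁ : F₁.card ≤ ∑ i ∈ Finset.range d, n.choose i := by
          have := ih (d - 1) F₁ hF₁sh hF₁g hF₁su (by omega)
          have hd1 : d - 1 + 1 = d := by omega
          rwa [hd1] at this
        rw [hcardsplit, sum_choose_pascal]
        omega

end KatonaProof

theorem stmt_12 (n s d : ℕ) (hs2 : 2 ≤ s) (hsn : s ≤ n - 2) (hsd : s = 2 * d)
    (F : Finset (Finset ℕ))
    (hF : ∀ A ∈ F, A ⊆ Finset.Icc 1 n)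
    (hunion : ∀ A ∈ F, ∀ B ∈ F, (A ∪ B).card ≤ s) :
    F.card ≤ ∑ i ∈ Finset.range (d + 1), n.choose i := by
  subst hsd
  have hn4 : 4 ≤ n := by omega
  have h2dn : 2 * d < n := by omega
  obtain ⟨G, hGsh, hGcard, hGg, hGsu⟩ :=
    KatonaProof.exists_shifted n (2 * d) (KatonaProof.mu F) F le_rfl hF hunion
  rw [← hGcard]
  exact KatonaProof.katona_shifted n d G hGsh hGg hGsu (Or.inr h2dn)
end

section
/- Let 2 ≤ s ≤ n - 2 with s = 2d+1, and let F ⊆ 2^[n] be an s-union family. Then |F| ≤ Σ_{i=0}^{d} C(n, i) + C(n-1, d). -/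
/-!
Shifting `j` to `i < j` (the UV-compression with `U = {i}`, `V = {j}`) preserves the size and the
`s`-union property and lowers the total sum of the elements of the members, so we may assume that
the family is invariant under all such shifts. For a shifted family on `[n]`, the sets avoiding
`n` form an `s`-union family on `[n-1]`, while the sets through `n`, with `n` removed, form an
`(s-2)`-union family there: if two of them had a union of size `s - 1`, shifting one of them into
a point of `[n-1]` outside that union would give two members of the family whose union has `s + 1`
elements. Induction on `n` then gives the bound, Pascal's rule being exactly the recurrence
satisfied by the right-hand side. The induction starts at `n = s + 1`, where `F` cannot contain a
set together with its complement, and at `s = 1`.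
-/

open Finset UV
open scoped FinsetFamily

variable {α : Type*} [DecidableEq α]

def IsSUnion (s : ℕ) (F : Finset (Finset α)) : Prop :=
  ∀ A ∈ F, ∀ B ∈ F, #(A ∪ B) ≤ s

theorem IsSUnion.mono {s : ℕ} {F G : Finset (Finset α)} (hG : IsSUnion s G) (hFG : F ⊆ G) :
    IsSUnion s F :=
  fun A hA B hB => hG A (hFG hA) B (hFG hB)

section SingletonCompression

variable {i j : α} {A B : Finset α}

theorem compress_singleton_of_notMem_of_mem (hi : i ∉ A) (hj : j ∈ A) :
    compress {i} {j} A = insert i (A.erase j) := by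
  rw [compress_of_disjoint_of_le (disjoint_singleton_left.2 hi) (singleton_subset_iff.2 hj),
    sup_eq_union, sdiff_singleton_eq_erase, union_comm, ← insert_eq,
    erase_insert_of_ne (ne_of_mem_of_not_mem hj hi).symm]

theorem compress_singleton_eq_self (h : ¬(i ∉ A ∧ j ∈ A)) : compress {i} {j} A = A := by
  rw [compress, if_neg]
  rintro ⟨hi, hj⟩
  exact h ⟨disjoint_singleton_left.1 hi, singleton_subset_iff.1 hj⟩

theorem compress_singleton_subset_insert : compress {i} {j} A ⊆ insert i A := by
  by_cases h : i ∉ A ∧ j ∈ A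
  · rw [compress_singleton_of_notMem_of_mem h.1 h.2]
    exact insert_subset_insert _ (erase_subset _ _)
  · rw [compress_singleton_eq_self h]
    exact subset_insert _ _

theorem compress_singleton_subset_insert_erase (hi : i ∉ A) :
    compress {i} {j} A ⊆ insert i (A.erase j) := by
  by_cases hj : j ∈ A
  · rw [compress_singleton_of_notMem_of_mem hi hj]
  · rw [compress_singleton_eq_self (fun h => hj h.2), erase_eq_of_notMem hj]
    exact subset_insert _ _

theorem card_le_of_subset_insert_erase {W U : Finset α} (hj : j ∈ U)
    (h : W ⊆ insert i (U.erase j)) : #W ≤ #U :=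
  calc #W ≤ #(insert i (U.erase j)) := card_le_card h
    _ ≤ #(U.erase j) + 1 := card_insert_le _ _
    _ = #U := card_erase_add_one hj

theorem card_compress_union_compress_le :
    #(compress {i} {j} A ∪ compress {i} {j} B) ≤ #(A ∪ B) := by
  by_cases hi : i ∈ A ∪ B
  · refine card_le_card ?_
    rw [← insert_eq_of_mem hi, insert_union_distrib]
    exact union_subset_union compress_singleton_subset_insert compress_singleton_subset_insert
  rw [mem_union, not_or] at hi
  by_cases hj : j ∈ A ∪ B
  · refine card_le_of_subset_insert_erase (i := i) hj ?_
    rw [erase_union_distrib, insert_union_distrib]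
    exact union_subset_union (compress_singleton_subset_insert_erase hi.1)
      (compress_singleton_subset_insert_erase hi.2)
  · rw [mem_union, not_or] at hj
    rw [compress_singleton_eq_self (fun h => hj.1 h.2), compress_singleton_eq_self (fun h => hj.2 h.2)]

theorem IsSUnion.card_union_compress_le {s : ℕ} {F : Finset (Finset α)} (hF : IsSUnion s F)
    (hA : A ∈ F) (hcA : compress {i} {j} A ∈ F) (hB : B ∈ F) :
    #(A ∪ compress {i} {j} B) ≤ s := by
  by_cases hjB : j ∈ B
  swap
  · rw [compress_singleton_eq_self (fun h => hjB h.2)]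
    exact hF A hA B hB
  by_cases hmoved : i ∉ A ∧ j ∈ A
  · refine (card_le_card ?_).trans (hF _ hcA B hB)
    rw [compress_singleton_of_notMem_of_mem hmoved.1 hmoved.2, insert_union,
      erase_union_of_mem hjB, ← union_insert]
    exact union_subset_union_right compress_singleton_subset_insert
  · calc #(A ∪ compress {i} {j} B) = #(compress {i} {j} A ∪ compress {i} {j} B) := by
          rw [compress_singleton_eq_self hmoved]
      _ ≤ #(A ∪ B) := card_compress_union_compress_le
      _ ≤ s := hF A hA B hB

theorem IsSUnion.compression {s : ℕ} {F : Finset (Finset α)} (hF : IsSUnion s F) :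
    IsSUnion s (𝓒 {i} {j} F) := by
  intro A hA B hB
  rw [mem_compression] at hA hB
  rcases hA with ⟨hA, hcA⟩ | ⟨-, A, hA, rfl⟩ <;> rcases hB with ⟨hB, hcB⟩ | ⟨-, B, hB, rfl⟩
  · exact hF A hA B hB
  · exact hF.card_union_compress_le hA hcA hB
  · exact union_comm (compress {i} {j} A) B ▸ hF.card_union_compress_le hB hcB hA
  · exact card_compress_union_compress_le.trans (hF A hA B hB)

end SingletonCompression

theorem forall_subset_compression {X : Finset α} {F : Finset (Finset α)} {i j : α}
    (hF : ∀ A ∈ F, A ⊆ X) (hi : i ∈ X) : ∀ A ∈ 𝓒 {i} {j} F, A ⊆ X := by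
  intro A hA
  rcases mem_compression.1 hA with ⟨hA, -⟩ | ⟨-, B, hB, rfl⟩
  · exact hF A hA
  · exact compress_singleton_subset_insert.trans (insert_subset hi (hF B hB))

theorem IsSUnion.memberSubfamily {s : ℕ} {G : Finset (Finset α)} {a : α} {X : Finset α}
    (hG : IsSUnion (s + 2) G) (ha : a ∉ X) (hX : s + 1 < #X)
    (hshift : ∀ j ∈ X, IsCompressed {j} {a} G) : IsSUnion s (G.memberSubfamily a) := by
  intro A hA B hB
  rw [mem_memberSubfamily] at hA hB
  have haAB : a ∉ A ∪ B := by simp [hA.2, hB.2]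
  have hAB : #(A ∪ B) + 1 ≤ s + 2 := by
    simpa [← insert_union_distrib, card_insert_of_notMem haAB] using hG _ hA.1 _ hB.1
  by_contra! hlt
  obtain ⟨j, hjX, hjAB⟩ := exists_mem_notMem_of_card_lt_card (s := A ∪ B) (t := X) (by omega)
  have hja : j ≠ a := ne_of_mem_of_not_mem hjX ha
  have hjA : j ∉ A := fun h => hjAB (mem_union_left _ h)
  have hshifted : insert j A ∈ G := by
    have := compress_mem_compression (u := {j}) (v := {a}) hA.1
    rwa [(hshift j hjX).eq, compress_singleton_of_notMem_of_mem (by simp [hja, hjA])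
      (mem_insert_self _ _), erase_insert hA.2] at this
  have := hG _ hshifted _ hB.1
  rw [insert_union, union_insert, card_insert_of_notMem (by simp [hja, hjAB]),
    card_insert_of_notMem haAB] at this
  omega

theorem forall_subset_of_mem_memberSubfamily {G : Finset (Finset α)} {a : α} {X : Finset α}
    (hG : ∀ A ∈ G, A ⊆ insert a X) : ∀ A ∈ G.memberSubfamily a, A ⊆ X := by
  intro A hA
  rw [mem_memberSubfamily] at hA
  exact (subset_insert_iff_of_notMem hA.2).1 ((subset_insert a A).trans (hG _ hA.1))

theorem forall_subset_of_mem_nonMemberSubfamily {G : Finset (Finset α)} {a : α} {X : Finset α}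
    (hG : ∀ A ∈ G, A ⊆ insert a X) : ∀ A ∈ G.nonMemberSubfamily a, A ⊆ X := by
  intro A hA
  rw [mem_nonMemberSubfamily] at hA
  exact (subset_insert_iff_of_notMem hA.2).1 (hG _ hA.1)

theorem IsSUnion.two_mul_card_le {s : ℕ} {F : Finset (Finset α)} {X : Finset α}
    (hF : IsSUnion s F) (hFX : ∀ A ∈ F, A ⊆ X) (hs : s < #X) : 2 * #F ≤ 2 ^ #X := by
  set C := F.image (X \ ·)
  have hdisj : Disjoint F C := by
    refine disjoint_left.2 fun A hA hAC => ?_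
    obtain ⟨B, hB, rfl⟩ := mem_image.1 hAC
    have := hF _ hA B hB
    rw [sdiff_union_of_subset (hFX B hB)] at this
    omega
  have hC : #C = #F := card_image_of_injOn fun A hA B hB hAB => by
    rw [← Finset.sdiff_sdiff_eq_self (hFX A hA), ← Finset.sdiff_sdiff_eq_self (hFX B hB)]
    exact congrArg (X \ ·) hAB
  have hsub : F ∪ C ⊆ X.powerset := by
    refine union_subset (fun A hA => mem_powerset.2 (hFX A hA)) fun A hA => ?_
    obtain ⟨B, -, rfl⟩ := mem_image.1 hA
    exact mem_powerset.2 sdiff_subset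
  have := card_le_card hsub
  rw [card_union_of_disjoint hdisj, hC, card_powerset] at this
  omega

theorem IsSUnion.card_le_two {F : Finset (Finset α)} (hF : IsSUnion 1 F) : #F ≤ 2 := by
  by_cases h : ∃ A ∈ F, A.Nonempty
  · obtain ⟨A, hA, hAne⟩ := h
    have hA1 : #A ≤ 1 := by simpa using hF A hA A hA
    have hsub : F ⊆ A.powerset := fun B hB => by
      have hAB : A ∪ B = A :=
        (eq_of_subset_of_card_le subset_union_left ((hF A hA B hB).trans hAne.card_pos)).symm
      exact mem_powerset.2 (hAB ▸ subset_union_right)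
    calc #F ≤ 2 ^ #A := card_powerset A ▸ card_le_card hsub
      _ ≤ 2 := by interval_cases #A <;> norm_num
  · push Not at h
    refine (card_le_card (t := {∅}) fun A hA => ?_).trans (by simp)
    simpa using h A hA

theorem sum_compress_singleton_lt {i j : ℕ} {A : Finset ℕ} (hij : i < j)
    (h : compress {i} {j} A ≠ A) : ∑ x ∈ compress {i} {j} A, x < ∑ x ∈ A, x := by
  by_cases hmoved : i ∉ A ∧ j ∈ A
  · rw [compress_singleton_of_notMem_of_mem hmoved.1 hmoved.2,
      sum_insert fun h => hmoved.1 (mem_of_mem_erase h), ← add_sum_erase A _ hmoved.2]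
    omega
  · exact absurd (compress_singleton_eq_self hmoved) h

def elementSum (F : Finset (Finset ℕ)) : ℕ := ∑ A ∈ F, ∑ x ∈ A, x

theorem elementSum_compression_lt {i j : ℕ} {F : Finset (Finset ℕ)} (hij : i < j)
    (h : 𝓒 {i} {j} F ≠ F) : elementSum (𝓒 {i} {j} F) < elementSum F := by
  have hmoved : (F.filter (compress {i} {j} · ∉ F)).Nonempty := by
    contrapose! h
    rw [compression, filter_image, h, image_empty, union_empty, filter_eq_self]
    exact fun A hA => not_not.1 (filter_eq_empty_iff.1 h hA)
  rw [elementSum, elementSum, compression, sum_union compress_disjoint,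
    ← filter_union_filter_not_eq (compress {i} {j} · ∈ F) F,
    sum_union (disjoint_filter_filter_not _ _ _), filter_union_filter_not_eq, add_lt_add_iff_left,
    filter_image, sum_image compress_injOn]
  refine sum_lt_sum_of_nonempty hmoved fun A hA => sum_compress_singleton_lt hij fun hA' => ?_
  rw [mem_filter, hA'] at hA
  exact hA.2 hA.1

theorem exists_isCompressed {s : ℕ} {X : Finset ℕ} {F : Finset (Finset ℕ)}
    (hF : IsSUnion s F) (hFX : ∀ A ∈ F, A ⊆ X) :
    ∃ G : Finset (Finset ℕ), IsSUnion s G ∧ (∀ A ∈ G, A ⊆ X) ∧ #G = #F ∧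
      ∀ i ∈ X, ∀ j, i < j → IsCompressed {i} {j} G := by
  obtain ⟨G, ⟨hG, hGX, hGF⟩, hmin⟩ := (measure elementSum).wf.has_min
    {G | IsSUnion s G ∧ (∀ A ∈ G, A ⊆ X) ∧ #G = #F} ⟨F, hF, hFX, rfl⟩
  refine ⟨G, hG, hGX, hGF, fun i hi j hij => by_contra fun hne => hmin _ ?_
    (elementSum_compression_lt hij hne)⟩
  exact ⟨hG.compression, forall_subset_compression hGX hi, (card_compression _ _ _).trans hGF⟩

def katonaBound (n d : ℕ) : ℕ := ∑ i ∈ range (d + 1), n.choose i + (n - 1).choose d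

theorem sum_range_succ_choose_succ (m k : ℕ) :
    ∑ i ∈ range (k + 1), (m + 1).choose i =
      ∑ i ∈ range (k + 1), m.choose i + ∑ i ∈ range k, m.choose i := by
  rw [sum_range_succ', sum_range_succ' (fun i => m.choose i)]
  simp only [Nat.choose_succ_succ, sum_add_distrib, Nat.choose_zero_right]
  ring

theorem katonaBound_zero (n : ℕ) : katonaBound n 0 = 2 := by
  simp [katonaBound]

theorem katonaBound_succ_succ {m : ℕ} (d : ℕ) (hm : 1 ≤ m) :
    katonaBound (m + 1) (d + 1) = katonaBound m d + katonaBound m (d + 1) := by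
  obtain ⟨k, rfl⟩ := Nat.exists_eq_add_of_le' hm
  simp only [katonaBound, sum_range_succ_choose_succ, Nat.add_sub_cancel, Nat.choose_succ_succ]
  ring

theorem katonaBound_two_mul_add_two (d : ℕ) : katonaBound (2 * d + 2) d = 2 ^ (2 * d + 1) := by
  have h := Nat.sum_range_choose_halfway d
  rw [sum_range_succ] at h
  rw [katonaBound, sum_range_succ_choose_succ, Nat.sum_range_choose_halfway, pow_succ, pow_mul]
  norm_num
  omega

theorem IsSUnion.card_le_katonaBound {n d : ℕ} {F : Finset (Finset ℕ)}
    (hF : IsSUnion (2 * d + 1) F) (hFn : ∀ A ∈ F, A ⊆ Icc 1 n) (hn : 2 * d + 2 ≤ n) :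
    #F ≤ katonaBound n d := by
  induction n generalizing d F with
  | zero => omega
  | succ m ih =>
    rcases d with _ | e
    · exact katonaBound_zero (m + 1) ▸ hF.card_le_two
    obtain hm | hm := hn.eq_or_lt
    · have := hF.two_mul_card_le hFn (by simp; omega)
      rw [← hm, katonaBound_two_mul_add_two]
      rw [Nat.card_Icc, Nat.add_sub_cancel, ← hm, pow_succ] at this
      omega
    obtain ⟨G, hG, hGn, hGF, hshift⟩ := exists_isCompressed hF hFn
    rw [← insert_Icc_right_eq_Icc_add_one (by omega)] at hGn
    rw [← hGF, ← card_memberSubfamily_add_card_nonMemberSubfamily (m + 1),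
      katonaBound_succ_succ _ (by omega)]
    have hG₂ : IsSUnion (2 * e + 1 + 2) G := by
      rwa [show 2 * e + 1 + 2 = 2 * (e + 1) + 1 by ring]
    refine add_le_add (ih ?_ (forall_subset_of_mem_memberSubfamily hGn) (by omega))
      (ih (hG.mono (filter_subset _ _)) (forall_subset_of_mem_nonMemberSubfamily hGn) (by omega))
    refine hG₂.memberSubfamily (X := Icc 1 m) (by simp) (by simp; omega) fun j hj =>
      hshift j (Icc_subset_Icc_right m.le_succ hj) (m + 1) (Nat.lt_succ_of_le (mem_Icc.1 hj).2)

theorem stmt_13_general (n s d : ℕ) (hsn : s ≤ n - 2) (hsd : s = 2 * d + 1)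
    (F : Finset (Finset ℕ))
    (hF : ∀ A ∈ F, A ⊆ Finset.Icc 1 n)
    (hunion : ∀ A ∈ F, ∀ B ∈ F, (A ∪ B).card ≤ s) :
    F.card ≤ (∑ i ∈ Finset.range (d + 1), n.choose i) + (n - 1).choose d := by
  subst hsd
  exact IsSUnion.card_le_katonaBound hunion hF (by omega)

theorem stmt_13 (n s d : ℕ) (hs2 : 2 ≤ s) (hsn : s ≤ n - 2) (hsd : s = 2 * d + 1)
    (F : Finset (Finset ℕ))
    (hF : ∀ A ∈ F, A ⊆ Finset.Icc 1 n)
    (hunion : ∀ A ∈ F, ∀ B ∈ F, (A ∪ B).card ≤ s) :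
    F.card ≤ (∑ i ∈ Finset.range (d + 1), n.choose i) + (n - 1).choose d :=
  stmt_13_general n s d hsn hsd F hF hunion
end
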